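/- arXiv:1903.03562 — 7 statements merged into one kernel-verified Lean document; each statement's English description precedes it below -/
import Mathlib

section
/- Let X ⊂ ℝ^M be a compact set and let ε̄ > 0. Let μ be a finite Borel measure on X whose Radon–Nikodym derivative with respect to the Lebesgue measure on ℝ^M is a continuous function g : X → ℝ. Then there exists a constant K > 0 such that for every x ∈ X, every s ∈ ℝ, and every ε with 0 < ε < ε̄, one has μ(𝒜(x,s,ε)) ≤ K·ε. -/
open MeasureTheory Set

lemma pow_sub_pow_le_aux (R : ℝ) :
    ∀ n : ℕ, ∀ a b : ℝ, 0 ≤ b → b ≤ a → a ≤ R →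
      a ^ (n + 1) - b ^ (n + 1) ≤ (n + 1 : ℝ) * R ^ n * (a - b) := by
  intro n
  induction n with
  | zero => intro a b hb hba haR; simp
  | succ n ih =>
    intro a b hb hba haR
    have hbR : b ≤ R := hba.trans haR
    have h1 := ih a b hb hba haR
    have h2 : b ^ (n + 1) ≤ R ^ (n + 1) := pow_le_pow_left₀ hb hbR _
    have hR : 0 ≤ R := hb.trans hbR
    have ha : 0 ≤ a := hb.trans hba
    have hab : 0 ≤ a - b := sub_nonneg.2 hba
    have h3 : (a - b) * b ^ (n + 1) ≤ (a - b) * R ^ (n + 1) :=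
      mul_le_mul_of_nonneg_left h2 hab
    have h4 : a * (a ^ (n + 1) - b ^ (n + 1)) ≤ R * ((n + 1 : ℝ) * R ^ n * (a - b)) := by
      have hnn : 0 ≤ a ^ (n + 1) - b ^ (n + 1) :=
        sub_nonneg.2 (pow_le_pow_left₀ hb hba _)
      calc a * (a ^ (n + 1) - b ^ (n + 1)) ≤ R * (a ^ (n + 1) - b ^ (n + 1)) :=
            mul_le_mul_of_nonneg_right haR hnn
        _ ≤ R * ((n + 1 : ℝ) * R ^ n * (a - b)) := mul_le_mul_of_nonneg_left h1 hR
    push_cast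
    calc a ^ (n + 1 + 1) - b ^ (n + 1 + 1)
        = a * (a ^ (n + 1) - b ^ (n + 1)) + (a - b) * b ^ (n + 1) := by ring
      _ ≤ R * ((n + 1 : ℝ) * R ^ n * (a - b)) + (a - b) * R ^ (n + 1) := add_le_add h4 h3
      _ = ((n : ℝ) + 1 + 1) * R ^ (n + 1) * (a - b) := by ring

/-- Let `X ⊂ ℝ^M` be a compact set and `ε̄ > 0`. Let `μ` be a finite Borel
measure on `X` whose Radon–Nikodym derivative with respect to Lebesgue measure on `ℝ^M` is a
continuous function `g : X → ℝ`. Then there is `K > 0` such that for every `x ∈ X`, `s ∈ ℝ`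
and `0 < ε < ε̄` one has `μ(𝒜(x,s,ε)) ≤ K·ε`, where
`𝒜(x,s,ε) = {y ∈ X : s − ε ≤ d(x,y) < s + ε}`. -/
theorem annulus_measure_bound (M : ℕ) (hM : 0 < M)
    (X : Set (EuclideanSpace ℝ (Fin M))) (hX : IsCompact X)
    (εbar : ℝ) (hεbar : 0 < εbar)
    (g : EuclideanSpace ℝ (Fin M) → ℝ) (hg : ContinuousOn g X)
    (μ : Measure (EuclideanSpace ℝ (Fin M))) [IsFiniteMeasure μ]
    (hμ : μ = (volume.restrict X).withDensity (fun x => ENNReal.ofReal (g x))) :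
    ∃ K > 0, ∀ x ∈ X, ∀ s : ℝ, ∀ ε : ℝ, 0 < ε → ε < εbar →
      μ {y ∈ X | s - ε ≤ dist x y ∧ dist x y < s + ε} ≤ ENNReal.ofReal (K * ε) := by
  haveI : Nonempty (Fin M) := Fin.pos_iff_nonempty.mp hM
  obtain ⟨C, hC⟩ := hX.exists_bound_of_continuousOn hg
  set C' : ℝ := max C 0 + 1 with hC'def
  have hC'pos : 0 < C' := by positivity
  set D : ℝ := Metric.diam X with hDdef
  have hD : 0 ≤ D := Metric.diam_nonneg
  set R : ℝ := D + 2 * εbar with hRdef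
  have hRpos : 0 < R := by positivity
  set c : ℝ := Real.sqrt Real.pi ^ M / Real.Gamma (M / 2 + 1) with hcdef
  have hcpos : 0 < c := by
    apply div_pos (pow_pos (Real.sqrt_pos.2 Real.pi_pos) M)
    apply Real.Gamma_pos_of_pos; positivity
  refine ⟨C' * (2 * M * R ^ (M - 1)) * c, by positivity, ?_⟩
  intro x hx s ε hε hεε
  set A := {y ∈ X | s - ε ≤ dist x y ∧ dist x y < s + ε} with hAdef
  set a : ℝ := s + ε with hadef
  set b : ℝ := max (s - ε) 0 with hbdef
  have hKε : 0 ≤ C' * (2 * M * R ^ (M - 1)) * c * ε := by positivity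
  -- empty cases
  by_cases hcase : a ≤ 0 ∨ R < a
  · have hempty : A = ∅ := by
      rw [eq_empty_iff_forall_notMem]
      rintro y ⟨hyX, h1, h2⟩
      rcases hcase with h | h
      · exact absurd (h2.trans_le h) (not_lt.2 dist_nonneg)
      · have hdy : dist x y ≤ D := Metric.dist_le_diam_of_mem hX.isBounded hx hyX
        linarith
    rw [hempty]
    simp
  push_neg at hcase
  obtain ⟨hapos, haR⟩ := hcase
  have hba : b ≤ a := max_le (by linarith) hapos.le
  have hb0 : 0 ≤ b := le_max_right _ _
  -- measurability of A
  have hA : MeasurableSet A := by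
    have hAeq : A = X ∩ ({y | s - ε ≤ dist x y} ∩ {y | dist x y < a}) := by
      ext y; simp only [hAdef, mem_setOf_eq, mem_inter_iff]
    rw [hAeq]
    exact hX.measurableSet.inter
      (((isClosed_le continuous_const (continuous_const.dist continuous_id)).measurableSet).inter
        (isOpen_lt (continuous_const.dist continuous_id) continuous_const).measurableSet)
  -- step 1
  have step1 : μ A ≤ ENNReal.ofReal C' * volume (Metric.closedBall x a \ Metric.ball x (s - ε)) := by
    rw [hμ, withDensity_apply _ hA]
    have h1 : ∫⁻ y in A, ENNReal.ofReal (g y) ∂(volume.restrict X)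
        ≤ ∫⁻ y in A, ENNReal.ofReal C' ∂(volume.restrict X) := by
      apply lintegral_mono_ae
      rw [ae_restrict_iff' hA]
      refine ae_of_all _ fun y hy => ENNReal.ofReal_le_ofReal ?_
      have h := hC y hy.1
      have : g y ≤ C := (le_abs_self _).trans (by simpa using h)
      linarith [le_max_left C 0]
    refine h1.trans ?_
    rw [setLIntegral_const]
    apply mul_le_mul_right
    rw [Measure.restrict_apply hA]
    apply measure_mono
    rintro y ⟨⟨hyX, h1, h2⟩, -⟩
    refine ⟨Metric.mem_closedBall.2 (by rw [dist_comm]; exact h2.le), fun hball => ?_⟩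
    rw [Metric.mem_ball, dist_comm] at hball
    exact absurd h1 (not_le.2 hball)
  -- step 2 : volume of the annulus
  have hball_fin : volume (Metric.ball x (s - ε)) ≠ ⊤ := measure_ball_lt_top.ne
  have hsub : Metric.ball x (s - ε) ⊆ Metric.closedBall x a :=
    (Metric.ball_subset_ball (by linarith)).trans Metric.ball_subset_closedBall
  have hvol : volume (Metric.closedBall x a \ Metric.ball x (s - ε))
      = ENNReal.ofReal (a ^ M) * ENNReal.ofReal c - ENNReal.ofReal (b ^ M) * ENNReal.ofReal c := by
    rw [measure_diff hsub measurableSet_ball.nullMeasurableSet hball_fin,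
      EuclideanSpace.volume_closedBall, EuclideanSpace.volume_ball, Fintype.card_fin]
    have hab : ENNReal.ofReal (s - ε) = ENNReal.ofReal b := by
      rcases le_total (s - ε) 0 with h | h
      · rw [hbdef, max_eq_right h, ENNReal.ofReal_eq_zero.2 h, ENNReal.ofReal_zero]
      · rw [hbdef, max_eq_left h]
    rw [hab, ← ENNReal.ofReal_pow hapos.le, ← ENNReal.ofReal_pow hb0, ← hcdef]
  -- real inequality
  have hM1 : M - 1 + 1 = M := Nat.succ_pred_eq_of_pos hM
  have key := pow_sub_pow_le_aux R (M - 1) a b hb0 hba haR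
  rw [hM1] at key
  have hcast : ((M - 1 : ℕ) : ℝ) + 1 = (M : ℝ) := by exact_mod_cast congrArg (Nat.cast (R := ℝ)) hM1
  rw [hcast] at key
  have hab2 : a - b ≤ 2 * ε := by
    have : s - ε ≤ b := le_max_left _ _
    simp only [hadef]; linarith
  have hreal : a ^ M - b ^ M ≤ (M : ℝ) * R ^ (M - 1) * (2 * ε) := by
    have h0 : (0:ℝ) ≤ (M : ℝ) * R ^ (M - 1) := by positivity
    nlinarith [mul_le_mul_of_nonneg_left hab2 h0]
  calc μ A ≤ ENNReal.ofReal C' * volume (Metric.closedBall x a \ Metric.ball x (s - ε)) := step1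
    _ = ENNReal.ofReal C' * (ENNReal.ofReal (a ^ M - b ^ M) * ENNReal.ofReal c) := by
        rw [hvol, ← ENNReal.sub_mul (fun _ _ => (ENNReal.ofReal_ne_top : ENNReal.ofReal c ≠ ⊤)),
          ← ENNReal.ofReal_sub _ (pow_nonneg hb0 M)]
    _ ≤ ENNReal.ofReal C' * (ENNReal.ofReal ((M : ℝ) * R ^ (M - 1) * (2 * ε)) * ENNReal.ofReal c) := by
        gcongr
    _ = ENNReal.ofReal (C' * ((M : ℝ) * R ^ (M - 1) * (2 * ε) * c)) := by
        rw [← ENNReal.ofReal_mul (by positivity), ← ENNReal.ofReal_mul hC'pos.le]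
    _ ≤ ENNReal.ofReal (C' * (2 * M * R ^ (M - 1)) * c * ε) :=
        ENNReal.ofReal_le_ofReal (le_of_eq (by ring))
end

section
/- Let X ⊂ ℝ^M be compact and let f : X → X be Borel measurable with invariant Borel probability measure μ whose Radon–Nikodym derivative with respect to Lebesgue measure on ℝ^M is continuous. Let (ε_m)_{m≥1} be a sequence of positive numbers converging to zero, and suppose there exists a sequence of countable measurable partitions (𝒯_m)_{m≥1} of X such that every T ∈ 𝒯_m has diameter less than ε_m and for every measurable set E ⊆ X and every T ∈ 𝒯_m one has |μ(E)·μ(T) − μ(f^{−m}(E) ∩ T)| < ε_m·μ(T). Then sup_{s∈ℝ} |F_m(s) − F(s)| → 0 as m → ∞. -/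
/-! Fix a cell `T` of the `m`-th partition and a point `t` of it. Up to an error `ε`, the points of
`T` moved less than `s` by `f^m` are those of `f^{-m}(B(t, s ± ε)) ∩ T`, whose measure the mixing
condition replaces by `μ(B(t, s ± ε)) μ(T)`, and this is `∫_T μ(B(x, s ± 2ε)) dμ(x)` up to the
same error. Summing over the cells gives `F(s - 2ε) - ε ≤ F_m(s) ≤ F(s + 2ε) + ε`. A bounded
density on a bounded set makes `F` Lipschitz, since annuli have volume `∝ b^M - a^M`; hence
`|F_m - F| = O(ε_m)` uniformly in `s`. In dimension `0` the two distributions coincide. -/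

open MeasureTheory Set Filter Metric Module
open scoped ENNReal

theorem ENNReal.le_add_ofReal_mul_of_toReal_le {p q r : ℝ≥0∞} {e : ℝ} (hp : p ≠ ∞) (hq : q ≠ ∞)
    (hr : r ≠ ∞) (he : 0 ≤ e) (h : p.toReal ≤ q.toReal + e * r.toReal) :
    p ≤ q + ENNReal.ofReal e * r :=
  calc p = ENNReal.ofReal p.toReal := (ENNReal.ofReal_toReal hp).symm
    _ ≤ ENNReal.ofReal (q.toReal + e * r.toReal) := ENNReal.ofReal_le_ofReal h
    _ = q + ENNReal.ofReal e * r := by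
      rw [ENNReal.ofReal_add (by positivity) (by positivity), ENNReal.ofReal_mul he,
        ENNReal.ofReal_toReal hq, ENNReal.ofReal_toReal hr]

theorem exists_forall_dist_lt_of_ediam_lt {α : Type*} [PseudoMetricSpace α] [Nonempty α]
    {T : Set α} {ε : ℝ} (h : ediam T < ENNReal.ofReal ε) :
    ∃ t, ∀ x ∈ T, dist x t < ε := by
  rcases T.eq_empty_or_nonempty with rfl | ⟨t, ht⟩
  · exact ⟨Classical.arbitrary α, by simp⟩
  · exact ⟨t, fun x hx => edist_lt_ofReal.1 ((edist_le_ediam_of_mem hx ht).trans_lt h)⟩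

theorem MeasureTheory.Measure.withDensity_restrict_le_smul {α : Type*} [MeasurableSpace α]
    (ν : Measure α) {X : Set α} (hX : MeasurableSet X) {g : α → ℝ≥0∞} {c : ℝ≥0∞}
    (hg : ∀ x ∈ X, g x ≤ c) : (ν.restrict X).withDensity g ≤ c • ν :=
  calc (ν.restrict X).withDensity g ≤ (ν.restrict X).withDensity (fun _ => c) :=
        withDensity_mono ((ae_restrict_iff' hX).2 (.of_forall hg))
    _ = c • ν.restrict X := withDensity_const c
    _ ≤ c • ν := by gcongr; exact Measure.restrict_le_self

section PseudoMetric

variable {α : Type*} [PseudoMetricSpace α] [MeasurableSpace α]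

theorem measure_dist_lt_eq_prod_of_subsingleton [Subsingleton α] (μ : Measure α)
    [IsProbabilityMeasure μ] (φ : α → α) (s : ℝ) :
    μ {x | dist x (φ x) < s} = (μ.prod μ) {p | dist p.1 p.2 < s} := by
  have hφ : ∀ x, dist x (φ x) = 0 := fun x => by rw [Subsingleton.elim (φ x) x, dist_self]
  have hprod : ∀ p : α × α, dist p.1 p.2 = 0 := fun p => by
    rw [Subsingleton.elim p.2 p.1, dist_self]
  by_cases hs : 0 < s <;> simp [hφ, hprod, hs]

structure IsMixingPartition (μ : Measure α) (X : Set α) (φ : α → α) (ε : ℝ) (𝒯 : Set (Set α)) :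
    Prop where
  countable : 𝒯.Countable
  measurableSet : ∀ T ∈ 𝒯, MeasurableSet T
  pairwise_disjoint : 𝒯.Pairwise Disjoint
  sUnion_eq : ⋃₀ 𝒯 = X
  ediam_lt : ∀ T ∈ 𝒯, ediam T < ENNReal.ofReal ε
  abs_sub_lt : ∀ T ∈ 𝒯, ∀ E ⊆ X, MeasurableSet E →
    |(μ E).toReal * (μ T).toReal - (μ (φ ⁻¹' E ∩ T)).toReal| < ε * (μ T).toReal

namespace IsMixingPartition

variable {μ : Measure α} {X : Set α} {φ : α → α} {ε : ℝ} {𝒯 : Set (Set α)}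

theorem measurableSet_of_sUnion (h : IsMixingPartition μ X φ ε 𝒯) : MeasurableSet X :=
  h.sUnion_eq ▸ .sUnion h.countable h.measurableSet

theorem subset_of_mem (h : IsMixingPartition μ X φ ε 𝒯) {T : Set α} (hT : T ∈ 𝒯) : T ⊆ X :=
  h.sUnion_eq ▸ subset_sUnion_of_mem hT

theorem measure_preimage_inter_le [IsFiniteMeasure μ] (h : IsMixingPartition μ X φ ε 𝒯)
    (hε : 0 ≤ ε) {T : Set α} (hT : T ∈ 𝒯) {E : Set α} (hEX : E ⊆ X) (hE : MeasurableSet E) :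
    μ (φ ⁻¹' E ∩ T) ≤ μ E * μ T + ENNReal.ofReal ε * μ T := by
  have := (abs_lt.1 (h.abs_sub_lt T hT E hEX hE)).1
  refine ENNReal.le_add_ofReal_mul_of_toReal_le (by finiteness) (by finiteness) (by finiteness)
    hε ?_
  rw [ENNReal.toReal_mul]
  linarith

theorem measure_mul_le [IsFiniteMeasure μ] (h : IsMixingPartition μ X φ ε 𝒯)
    (hε : 0 ≤ ε) {T : Set α} (hT : T ∈ 𝒯) {E : Set α} (hEX : E ⊆ X) (hE : MeasurableSet E) :
    μ E * μ T ≤ μ (φ ⁻¹' E ∩ T) + ENNReal.ofReal ε * μ T := by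
  have := (abs_lt.1 (h.abs_sub_lt T hT E hEX hE)).2
  refine ENNReal.le_add_ofReal_mul_of_toReal_le (by finiteness) (by finiteness) (by finiteness)
    hε ?_
  rw [ENNReal.toReal_mul]
  linarith

theorem tsum_measure_inter (h : IsMixingPartition μ X φ ε 𝒯) (hμX : μ Xᶜ = 0) {A : Set α}
    (hA : MeasurableSet A) : ∑' T : 𝒯, μ (A ∩ T) = μ A := by
  have := h.countable.to_subtype
  rw [← measure_iUnion (fun T T' hTT' => (h.pairwise_disjoint T.2 T'.2
      (Subtype.coe_injective.ne hTT')).mono inter_subset_right inter_subset_right)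
    (fun T => hA.inter (h.measurableSet T T.2)), ← inter_iUnion, ← sUnion_eq_iUnion, h.sUnion_eq,
    measure_inter_conull hμX]

theorem tsum_measure_eq_one [IsProbabilityMeasure μ] (h : IsMixingPartition μ X φ ε 𝒯)
    (hμX : μ Xᶜ = 0) : ∑' T : 𝒯, μ T = 1 := by
  simpa using h.tsum_measure_inter hμX MeasurableSet.univ

theorem tsum_setLIntegral (h : IsMixingPartition μ X φ ε 𝒯) (hμX : μ Xᶜ = 0) (g : α → ℝ≥0∞) :
    ∑' T : 𝒯, ∫⁻ x in T, g x ∂μ = ∫⁻ x, g x ∂μ := by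
  have := h.countable.to_subtype
  rw [← lintegral_iUnion (fun T : 𝒯 => h.measurableSet T T.2)
    (fun T T' hTT' => h.pairwise_disjoint T.2 T'.2 (Subtype.coe_injective.ne hTT')),
    ← sUnion_eq_iUnion, h.sUnion_eq, Measure.restrict_eq_self_of_ae_mem hμX]

end IsMixingPartition

variable [OpensMeasurableSpace α]

theorem MeasureTheory.Measure.prod_setOf_dist_lt [SecondCountableTopology α] (μ ν : Measure α)
    [SFinite ν] (r : ℝ) :
    (μ.prod ν) {p | dist p.1 p.2 < r} = ∫⁻ x, ν (ball x r) ∂μ := by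
  rw [Measure.prod_apply (measurableSet_lt measurable_dist measurable_const)]
  congr! with x
  ext y
  simp [dist_comm]

namespace IsMixingPartition

variable {μ : Measure α} [IsProbabilityMeasure μ] {X : Set α} {φ : α → α} {ε : ℝ}
  {𝒯 : Set (Set α)}

theorem measure_inter_le_setLIntegral [Nonempty α] (h : IsMixingPartition μ X φ ε 𝒯)
    (hε : 0 ≤ ε) (hφX : MapsTo φ X X) {T : Set α} (hT : T ∈ 𝒯) (s : ℝ) :
    μ ({x | dist x (φ x) < s} ∩ T) ≤
      ∫⁻ x in T, μ (ball x (s + 2 * ε)) ∂μ + ENNReal.ofReal ε * μ T := by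
  obtain ⟨t, ht⟩ := exists_forall_dist_lt_of_ediam_lt (h.ediam_lt T hT)
  set E := ball t (s + ε) ∩ X
  have hφE : {x | dist x (φ x) < s} ∩ T ⊆ φ ⁻¹' E ∩ T := by
    rintro x ⟨hx, hxT⟩
    refine ⟨⟨?_, hφX (h.subset_of_mem hT hxT)⟩, hxT⟩
    have := dist_triangle (φ x) x t
    rw [dist_comm (φ x) x] at this
    exact mem_ball.2 (by linarith [ht x hxT, hx.out])
  have hEball : ∀ x ∈ T, E ⊆ ball x (s + 2 * ε) := fun x hx =>
    inter_subset_left.trans (ball_subset_ball' (by rw [dist_comm]; linarith [ht x hx]))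
  calc μ ({x | dist x (φ x) < s} ∩ T) ≤ μ (φ ⁻¹' E ∩ T) := measure_mono hφE
    _ ≤ μ E * μ T + ENNReal.ofReal ε * μ T :=
      h.measure_preimage_inter_le hε hT inter_subset_right
        (measurableSet_ball.inter h.measurableSet_of_sUnion)
    _ = ∫⁻ _ in T, μ E ∂μ + ENNReal.ofReal ε * μ T := by rw [setLIntegral_const]
    _ ≤ ∫⁻ x in T, μ (ball x (s + 2 * ε)) ∂μ + ENNReal.ofReal ε * μ T := by
      gcongr ?_ + _
      exact setLIntegral_mono' (h.measurableSet T hT) fun x hx => measure_mono (hEball x hx)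

theorem setLIntegral_le_measure_inter [Nonempty α] (h : IsMixingPartition μ X φ ε 𝒯)
    (hε : 0 ≤ ε) (hμX : μ Xᶜ = 0) {T : Set α} (hT : T ∈ 𝒯) (s : ℝ) :
    ∫⁻ x in T, μ (ball x (s - 2 * ε)) ∂μ ≤
      μ ({x | dist x (φ x) < s} ∩ T) + ENNReal.ofReal ε * μ T := by
  obtain ⟨t, ht⟩ := exists_forall_dist_lt_of_ediam_lt (h.ediam_lt T hT)
  set E := ball t (s - ε) ∩ X
  have hφE : φ ⁻¹' E ∩ T ⊆ {x | dist x (φ x) < s} ∩ T := by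
    rintro x ⟨⟨hx, -⟩, hxT⟩
    refine ⟨show dist x (φ x) < s from ?_, hxT⟩
    have := dist_triangle x t (φ x)
    rw [mem_ball, dist_comm] at hx
    linarith [ht x hxT, hx]
  have hballE : ∀ x ∈ T, μ (ball x (s - 2 * ε)) ≤ μ E := fun x hx => by
    rw [← measure_inter_conull hμX]
    exact measure_mono (inter_subset_inter_left _ (ball_subset_ball' (by linarith [ht x hx])))
  calc ∫⁻ x in T, μ (ball x (s - 2 * ε)) ∂μ ≤ ∫⁻ _ in T, μ E ∂μ :=
        setLIntegral_mono' (h.measurableSet T hT) hballE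
    _ = μ E * μ T := setLIntegral_const _ _
    _ ≤ μ (φ ⁻¹' E ∩ T) + ENNReal.ofReal ε * μ T :=
      h.measure_mul_le hε hT inter_subset_right
        (measurableSet_ball.inter h.measurableSet_of_sUnion)
    _ ≤ μ ({x | dist x (φ x) < s} ∩ T) + ENNReal.ofReal ε * μ T := by gcongr

theorem measure_dist_lt_le [SecondCountableTopology α] [Nonempty α]
    (h : IsMixingPartition μ X φ ε 𝒯) (hε : 0 ≤ ε) (hφ : Measurable φ) (hφX : MapsTo φ X X)
    (hμX : μ Xᶜ = 0) (s : ℝ) :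
    μ {x | dist x (φ x) < s} ≤ (μ.prod μ) {p | dist p.1 p.2 < s + 2 * ε} + ENNReal.ofReal ε := by
  have hA : MeasurableSet {x | dist x (φ x) < s} :=
    measurableSet_lt (measurable_id.dist hφ) measurable_const
  calc μ {x | dist x (φ x) < s} = ∑' T : 𝒯, μ ({x | dist x (φ x) < s} ∩ T) :=
        (h.tsum_measure_inter hμX hA).symm
    _ ≤ ∑' T : 𝒯, (∫⁻ x in T, μ (ball x (s + 2 * ε)) ∂μ + ENNReal.ofReal ε * μ T) :=
      ENNReal.tsum_le_tsum fun T => h.measure_inter_le_setLIntegral hε hφX T.2 s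
    _ = (μ.prod μ) {p | dist p.1 p.2 < s + 2 * ε} + ENNReal.ofReal ε := by
      rw [ENNReal.tsum_add, ENNReal.tsum_mul_left, h.tsum_setLIntegral hμX,
        h.tsum_measure_eq_one hμX, mul_one, Measure.prod_setOf_dist_lt]

theorem prod_dist_lt_le [SecondCountableTopology α] [Nonempty α]
    (h : IsMixingPartition μ X φ ε 𝒯) (hε : 0 ≤ ε) (hφ : Measurable φ) (hμX : μ Xᶜ = 0)
    (s : ℝ) :
    (μ.prod μ) {p | dist p.1 p.2 < s - 2 * ε} ≤ μ {x | dist x (φ x) < s} + ENNReal.ofReal ε := by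
  have hA : MeasurableSet {x | dist x (φ x) < s} :=
    measurableSet_lt (measurable_id.dist hφ) measurable_const
  calc (μ.prod μ) {p | dist p.1 p.2 < s - 2 * ε}
        = ∑' T : 𝒯, ∫⁻ x in T, μ (ball x (s - 2 * ε)) ∂μ := by
        rw [Measure.prod_setOf_dist_lt, h.tsum_setLIntegral hμX]
    _ ≤ ∑' T : 𝒯, (μ ({x | dist x (φ x) < s} ∩ T) + ENNReal.ofReal ε * μ T) :=
      ENNReal.tsum_le_tsum fun T => h.setLIntegral_le_measure_inter hε hμX T.2 s
    _ = μ {x | dist x (φ x) < s} + ENNReal.ofReal ε := by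
      rw [ENNReal.tsum_add, ENNReal.tsum_mul_left, h.tsum_measure_inter hμX hA,
        h.tsum_measure_eq_one hμX, mul_one]

theorem abs_toReal_sub_le [SecondCountableTopology α] [Nonempty α]
    (h : IsMixingPartition μ X φ ε 𝒯) (hε : 0 ≤ ε) (hφ : Measurable φ) (hφX : MapsTo φ X X)
    (hμX : μ Xᶜ = 0) {K : ℝ}
    (hK : ∀ a b, a ≤ b → ((μ.prod μ) {p | dist p.1 p.2 < b}).toReal ≤
      ((μ.prod μ) {p | dist p.1 p.2 < a}).toReal + K * (b - a)) (s : ℝ) :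
    |(μ {x | dist x (φ x) < s}).toReal - ((μ.prod μ) {p | dist p.1 p.2 < s}).toReal| ≤
      (2 * K + 1) * ε := by
  have hup := ENNReal.toReal_mono (by finiteness) (h.measure_dist_lt_le hε hφ hφX hμX s)
  have hlow := ENNReal.toReal_mono (by finiteness) (h.prod_dist_lt_le hε hφ hμX s)
  rw [ENNReal.toReal_add (by finiteness) (by finiteness), ENNReal.toReal_ofReal hε] at hup hlow
  have := hK s (s + 2 * ε) (by linarith)
  have := hK (s - 2 * ε) s (by linarith)
  rw [abs_le]
  constructor <;> linarith

end IsMixingPartition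

end PseudoMetric

section AddHaar

variable {E : Type*} [NormedAddCommGroup E] [NormedSpace ℝ E] [FiniteDimensional ℝ E]
  [Nontrivial E] [MeasurableSpace E] [BorelSpace E] (ν : Measure E) [ν.IsAddHaarMeasure]

theorem MeasureTheory.Measure.addHaar_ball_eq_max (x : E) (r : ℝ) :
    ν (ball x r) = ENNReal.ofReal (max r 0 ^ finrank ℝ E) * ν (ball 0 1) := by
  rcases le_total r 0 with hr | hr
  · simp [ball_eq_empty.2 hr, max_eq_right hr, zero_pow finrank_pos.ne']
  · rw [max_eq_left hr, addHaar_ball ν x hr]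

theorem MeasureTheory.Measure.addHaar_ball_sdiff_ball_le {a b R : ℝ} (hab : a ≤ b) (hbR : b ≤ R)
    (hR : 0 ≤ R) (x : E) :
    ν (ball x b \ ball x a) ≤
      ENNReal.ofReal ((b - a) * finrank ℝ E * R ^ (finrank ℝ E - 1)) * ν (ball 0 1) := by
  set n := finrank ℝ E
  have hpow : max b 0 ^ n ≤ max a 0 ^ n + (b - a) * n * R ^ (n - 1) := by
    have hdiff : |max b 0 - max a 0| ≤ b - a :=
      (abs_max_sub_max_le_abs b a 0).trans (abs_of_nonneg (sub_nonneg.2 hab)).le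
    have hmax : max |max b 0| |max a 0| ≤ R := by
      rw [abs_of_nonneg (le_max_right b 0), abs_of_nonneg (le_max_right a 0)]
      exact max_le (max_le hbR hR) (max_le (hab.trans hbR) hR)
    have := (le_abs_self _).trans (abs_pow_sub_pow_le (max b 0) (max a 0) n)
    have : |max b 0 - max a 0| * n * max |max b 0| |max a 0| ^ (n - 1) ≤
        (b - a) * n * R ^ (n - 1) := by gcongr
    linarith
  rw [measure_sdiff_le_iff_le_add measurableSet_ball.nullMeasurableSet
    (ball_subset_ball hab) measure_ball_lt_top.ne, addHaar_ball_eq_max ν x b,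
    addHaar_ball_eq_max ν x a,
    ← add_mul, ← ENNReal.ofReal_add (by positivity)
      (mul_nonneg (mul_nonneg (sub_nonneg.2 hab) n.cast_nonneg) (pow_nonneg hR _))]
  gcongr

theorem MeasureTheory.Measure.measure_ball_le_add_of_le_smul {μ : Measure E} {c : ℝ≥0∞}
    (hμν : μ ≤ c • ν) {X : Set E} (hμX : μ Xᶜ = 0) {x : E} {R : ℝ} (hR : 0 ≤ R)
    (hXR : X ⊆ ball x R) {a b : ℝ} (hab : a ≤ b) :
    μ (ball x b) ≤
      μ (ball x a) + c * (ENNReal.ofReal ((b - a) * finrank ℝ E * R ^ (finrank ℝ E - 1)) *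
        ν (ball 0 1)) := by
  have hmin : min a R ≤ min b R := min_le_min_right R hab
  have hannulus : ν (ball x (min b R) \ ball x (min a R)) ≤
      ENNReal.ofReal ((b - a) * finrank ℝ E * R ^ (finrank ℝ E - 1)) * ν (ball 0 1) := by
    refine (ν.addHaar_ball_sdiff_ball_le hmin (min_le_right b R) hR x).trans ?_
    gcongr ENNReal.ofReal (?_ * _ * _) * _
    simp only [min_def]
    split_ifs <;> linarith
  -- `μ` lives on `X ⊆ ball x R`, so radii may be truncated at `R`, where the annulus bound holds.
  calc μ (ball x b) = μ (ball x b ∩ X) := (measure_inter_conull hμX).symm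
    _ ≤ μ (ball x (min b R)) := measure_mono fun y hy => mem_ball.2 (lt_min hy.1 (hXR hy.2))
    _ ≤ μ (ball x (min a R)) + μ (ball x (min b R) \ ball x (min a R)) :=
      tsub_le_iff_left.1 le_measure_sdiff
    _ ≤ μ (ball x a) + c * ν (ball x (min b R) \ ball x (min a R)) :=
      add_le_add (measure_mono (ball_subset_ball (min_le_left a R))) (hμν _)
    _ ≤ _ := by gcongr

theorem MeasureTheory.Measure.exists_prod_dist_lt_toReal_le_add_of_le_smul (μ : Measure E)
    [IsProbabilityMeasure μ] {c : ℝ≥0∞} (hc : c ≠ ∞) (hμν : μ ≤ c • ν) {X : Set E}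
    (hX : Bornology.IsBounded X) (hμX : μ Xᶜ = 0) :
    ∃ K : ℝ, ∀ a b, a ≤ b → ((μ.prod μ) {p | dist p.1 p.2 < b}).toReal ≤
      ((μ.prod μ) {p | dist p.1 p.2 < a}).toReal + K * (b - a) := by
  set n := finrank ℝ E
  set R := diam X + 1
  have hR : 0 ≤ R := by positivity
  have hXR : ∀ x ∈ X, X ⊆ ball x R := fun x hx y hy =>
    mem_ball.2 ((dist_le_diam_of_mem hX hy hx).trans_lt (lt_add_one _))
  refine ⟨(c * ν (ball 0 1)).toReal * (n * R ^ (n - 1)), fun a b hab => ?_⟩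
  set k := c * (ENNReal.ofReal ((b - a) * n * R ^ (n - 1)) * ν (ball 0 1))
  have hk : k ≠ ∞ := ENNReal.mul_ne_top hc (by finiteness)
  have hprod : (μ.prod μ) {p | dist p.1 p.2 < b} ≤ (μ.prod μ) {p | dist p.1 p.2 < a} + k := by
    rw [Measure.prod_setOf_dist_lt, Measure.prod_setOf_dist_lt]
    calc ∫⁻ x, μ (ball x b) ∂μ ≤ ∫⁻ x, (μ (ball x a) + k) ∂μ := by
          refine lintegral_mono_ae ?_
          filter_upwards [mem_ae_iff.2 hμX] with x hx
          exact ν.measure_ball_le_add_of_le_smul hμν hμX hR (hXR x hx) hab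
      _ = ∫⁻ x, μ (ball x a) ∂μ + k := by
          rw [lintegral_add_right _ measurable_const, lintegral_const, measure_univ, mul_one]
  calc ((μ.prod μ) {p | dist p.1 p.2 < b}).toReal
      ≤ ((μ.prod μ) {p | dist p.1 p.2 < a}).toReal + k.toReal := by
        rw [← ENNReal.toReal_add (by finiteness) hk]
        exact ENNReal.toReal_mono (by finiteness) hprod
    _ = _ := by
        rw [ENNReal.toReal_mul, ENNReal.toReal_mul, ENNReal.toReal_mul,
          ENNReal.toReal_ofReal (by positivity)]
        ring

end AddHaar

theorem cdf_uniform_convergence_general (M : ℕ)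
    (X : Set (EuclideanSpace ℝ (Fin M))) (hX : IsCompact X)
    (f : EuclideanSpace ℝ (Fin M) → EuclideanSpace ℝ (Fin M))
    (hf : Measurable f) (hfX : MapsTo f X X)
    (μ : Measure (EuclideanSpace ℝ (Fin M))) [IsProbabilityMeasure μ]
    (g : EuclideanSpace ℝ (Fin M) → ℝ) (hg : ContinuousOn g X)
    (hμ : μ = (volume.restrict X).withDensity (fun x => ENNReal.ofReal (g x)))
    (ε : ℕ → ℝ) (hεpos : ∀ m, 1 ≤ m → 0 < ε m) (hεlim : Tendsto ε atTop (nhds 0))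
    (𝒯 : ℕ → Set (Set (EuclideanSpace ℝ (Fin M))))
    (hcount : ∀ m, 1 ≤ m → (𝒯 m).Countable)
    (hmeas : ∀ m, 1 ≤ m → ∀ T ∈ 𝒯 m, MeasurableSet T)
    (hdisj : ∀ m, 1 ≤ m → (𝒯 m).Pairwise Disjoint)
    (hcover : ∀ m, 1 ≤ m → ⋃₀ 𝒯 m = X)
    (hdiam : ∀ m, 1 ≤ m → ∀ T ∈ 𝒯 m, EMetric.diam T < ENNReal.ofReal (ε m))
    (hmix : ∀ m, 1 ≤ m → ∀ T ∈ 𝒯 m, ∀ E ⊆ X, MeasurableSet E →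
      |(μ E).toReal * (μ T).toReal - (μ (f^[m] ⁻¹' E ∩ T)).toReal| < ε m * (μ T).toReal) :
    Tendsto (fun m : ℕ => ⨆ s : ℝ,
      |(μ {x | dist x (f^[m] x) < s}).toReal -
          ((μ.prod μ) {p | dist p.1 p.2 < s}).toReal|) atTop (nhds 0) := by
  rcases subsingleton_or_nontrivial (EuclideanSpace ℝ (Fin M)) with hM | hM
  · simp only [measure_dist_lt_eq_prod_of_subsingleton μ, sub_self, abs_zero, ciSup_const]
    exact tendsto_const_nhds
  have hXm : MeasurableSet X := hX.isClosed.measurableSet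
  have hμX : μ Xᶜ = 0 := hμ ▸ withDensity_absolutelyContinuous _ _ (ae_restrict_mem hXm)
  obtain ⟨C, hC⟩ := hX.bddAbove_image hg
  have hμν : μ ≤ ENNReal.ofReal C • volume := hμ ▸
    volume.withDensity_restrict_le_smul hXm fun x hx => ENNReal.ofReal_le_ofReal (hC ⟨x, hx, rfl⟩)
  obtain ⟨K, hK⟩ := volume.exists_prod_dist_lt_toReal_le_add_of_le_smul μ ENNReal.ofReal_ne_top
    hμν hX.isBounded hμX
  refine squeeze_zero' (.of_forall fun m => Real.iSup_nonneg fun s => abs_nonneg _) ?_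
    (by simpa using hεlim.const_mul (2 * K + 1))
  filter_upwards [eventually_ge_atTop 1] with m hm
  have h𝒯 : IsMixingPartition μ X f^[m] (ε m) (𝒯 m) :=
    ⟨hcount m hm, hmeas m hm, hdisj m hm, hcover m hm, hdiam m hm, hmix m hm⟩
  exact ciSup_le fun s =>
    h𝒯.abs_toReal_sub_le (hεpos m hm).le (hf.iterate m) (hfX.iterate m) hμX hK s

/-- **Statement 2.** Let `X ⊂ ℝ^M` be compact and `f : X → X` Borel measurable with invariant
Borel probability measure `μ` whose Radon–Nikodym derivative with respect to Lebesgue measure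
is continuous. Let `(ε_m)` be positive numbers converging to zero and suppose there are
countable measurable partitions `𝒯_m` of `X` whose elements have diameter less than `ε_m` and
such that `|μ(E)·μ(T) − μ(f^{−m}(E) ∩ T)| < ε_m·μ(T)` for every measurable `E ⊆ X` and every
`T ∈ 𝒯_m`. Then `sup_s |F_m(s) − F(s)| → 0` as `m → ∞`, where
`F_m(s) = μ{x : d(x, f^m(x)) < s}` and `F(s) = (μ×μ){(x,y) : d(x,y) < s}`. -/
theorem cdf_uniform_convergence (M : ℕ)
    (X : Set (EuclideanSpace ℝ (Fin M))) (hX : IsCompact X)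
    (f : EuclideanSpace ℝ (Fin M) → EuclideanSpace ℝ (Fin M))
    (hf : Measurable f) (hfX : MapsTo f X X)
    (μ : Measure (EuclideanSpace ℝ (Fin M))) [IsProbabilityMeasure μ]
    (hinv : ∀ E : Set (EuclideanSpace ℝ (Fin M)), MeasurableSet E → μ (f ⁻¹' E) = μ E)
    (g : EuclideanSpace ℝ (Fin M) → ℝ) (hg : ContinuousOn g X)
    (hμ : μ = (volume.restrict X).withDensity (fun x => ENNReal.ofReal (g x)))
    (ε : ℕ → ℝ) (hεpos : ∀ m, 1 ≤ m → 0 < ε m) (hεlim : Tendsto ε atTop (nhds 0))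
    (𝒯 : ℕ → Set (Set (EuclideanSpace ℝ (Fin M))))
    (hcount : ∀ m, 1 ≤ m → (𝒯 m).Countable)
    (hmeas : ∀ m, 1 ≤ m → ∀ T ∈ 𝒯 m, MeasurableSet T)
    (hdisj : ∀ m, 1 ≤ m → (𝒯 m).Pairwise Disjoint)
    (hcover : ∀ m, 1 ≤ m → ⋃₀ 𝒯 m = X)
    (hdiam : ∀ m, 1 ≤ m → ∀ T ∈ 𝒯 m, EMetric.diam T < ENNReal.ofReal (ε m))
    (hmix : ∀ m, 1 ≤ m → ∀ T ∈ 𝒯 m, ∀ E ⊆ X, MeasurableSet E →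
      |(μ E).toReal * (μ T).toReal - (μ (f^[m] ⁻¹' E ∩ T)).toReal| < ε m * (μ T).toReal) :
    Tendsto (fun m : ℕ => ⨆ s : ℝ,
      |(μ {x | dist x (f^[m] x) < s}).toReal -
          ((μ.prod μ) {p | dist p.1 p.2 < s}).toReal|) atTop (nhds 0) :=
  cdf_uniform_convergence_general M X hX f hf hfX μ g hg hμ ε hεpos hεlim 𝒯 hcount hmeas hdisj
    hcover hdiam hmix
end

section
/- Let (X,d) be a metric space equipped with a finite Borel measure μ, let s ∈ ℝ, ε > 0, K > 0, and let T ⊆ X be a measurable set of diameter less than ε with a distinguished point x_T ∈ T. If μ(𝒜(x_T,s,ε)) ≤ K·ε, then |μ(B(x_T,s))·μ(T) − (μ × μ)({(x,y) ∈ T × X : d(x,y) < s})| ≤ K·ε·μ(T). -/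
/-!
Every point of `T` lies within `ε` of `x_T`, so by the triangle inequality the set
`{(x, y) ∈ T × X : d(x, y) < s}` is squeezed between the rectangles `T × B(x_T, s - ε)` and
`T × B(x_T, s + ε)`. The product measures of these rectangles, and `μ(B(x_T, s)) μ(T)`, all lie
in an interval of length at most `μ(T) μ(𝒜(x_T, s, ε))`.
-/

open MeasureTheory Set Metric

theorem dist_lt_of_ediam_lt {X : Type*} [PseudoMetricSpace X] {T : Set X} {ε : ℝ}
    (hT : ediam T < ENNReal.ofReal ε) {x y : X} (hx : x ∈ T) (hy : y ∈ T) : dist x y < ε :=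
  edist_lt_ofReal.mp ((edist_le_ediam_of_mem hx hy).trans_lt hT)

section Sandwich

variable {X : Type*} [PseudoMetricSpace X] {T : Set X} {c : X} {s ε : ℝ}

theorem prod_ball_sub_subset_setOf_dist_lt (hT : ∀ x ∈ T, dist x c < ε) :
    T ×ˢ ball c (s - ε) ⊆ {p : X × X | p.1 ∈ T ∧ dist p.1 p.2 < s} := by
  rintro ⟨x, y⟩ ⟨hx, hy⟩
  refine ⟨hx, ?_⟩
  have := dist_triangle_right x y c
  have := hT x hx
  rw [mem_ball] at hy
  dsimp only
  linarith

theorem setOf_dist_lt_subset_prod_ball_add (hT : ∀ x ∈ T, dist x c < ε) :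
    {p : X × X | p.1 ∈ T ∧ dist p.1 p.2 < s} ⊆ T ×ˢ ball c (s + ε) := by
  rintro ⟨x, y⟩ ⟨hx, hxy⟩
  refine ⟨hx, ?_⟩
  have := dist_triangle_left y c x
  have := hT x hx
  rw [mem_ball]
  dsimp only at hxy
  linarith

end Sandwich

theorem abs_measureReal_mul_sub_prod_le {α β : Type*} [MeasurableSpace α] [MeasurableSpace β]
    (μ : Measure α) (ν : Measure β) [IsFiniteMeasure μ] [IsFiniteMeasure ν]
    {T : Set α} {L B U : Set β} {S : Set (α × β)}
    (hLB : L ⊆ B) (hBU : B ⊆ U) (hLS : T ×ˢ L ⊆ S) (hSU : S ⊆ T ×ˢ U) :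
    |ν.real B * μ.real T - (μ.prod ν).real S| ≤ μ.real T * ν.real (U \ L) := by
  have hB : ν.real B * μ.real T ∈ Icc (μ.real T * ν.real L) (μ.real T * ν.real U) := by
    rw [mul_comm (ν.real B)]
    exact ⟨mul_le_mul_of_nonneg_left (measureReal_mono hLB) measureReal_nonneg,
      mul_le_mul_of_nonneg_left (measureReal_mono hBU) measureReal_nonneg⟩
  have hS : (μ.prod ν).real S ∈ Icc (μ.real T * ν.real L) (μ.real T * ν.real U) := by
    rw [← measureReal_prod_prod, ← measureReal_prod_prod]
    exact ⟨measureReal_mono hLS, measureReal_mono hSU⟩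
  calc _ ≤ μ.real T * ν.real U - μ.real T * ν.real L := Real.dist_le_of_mem_Icc hB hS
    _ = μ.real T * (ν.real U - ν.real L) := (mul_sub _ _ _).symm
    _ ≤ μ.real T * ν.real (U \ L) := by gcongr; exact le_measureReal_sdiff

theorem prod_measure_ball_estimate_general {X : Type*} [MeasurableSpace X] [MetricSpace X]
    (μ : Measure X) [IsFiniteMeasure μ]
    (s ε K : ℝ)
    (T : Set X) (hT : EMetric.diam T < ENNReal.ofReal ε)
    (xT : X) (hxT : xT ∈ T)
    (hann : (μ {y | s - ε ≤ dist xT y ∧ dist xT y < s + ε}).toReal ≤ K * ε) :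
    |(μ (Metric.ball xT s)).toReal * (μ T).toReal -
        ((μ.prod μ) {p : X × X | p.1 ∈ T ∧ dist p.1 p.2 < s}).toReal|
      ≤ K * ε * (μ T).toReal := by
  have hTball : ∀ x ∈ T, dist x xT < ε := fun x hx => dist_lt_of_ediam_lt hT hx hxT
  have hε : 0 ≤ ε := (dist_nonneg.trans_lt (hTball xT hxT)).le
  have hA : ball xT (s + ε) \ ball xT (s - ε) = {y | s - ε ≤ dist xT y ∧ dist xT y < s + ε} := by
    ext y
    simp [dist_comm, and_comm]
  calc _ ≤ μ.real T * μ.real (ball xT (s + ε) \ ball xT (s - ε)) :=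
        abs_measureReal_mul_sub_prod_le μ μ (ball_subset_ball (by linarith))
          (ball_subset_ball (by linarith)) (prod_ball_sub_subset_setOf_dist_lt hTball)
          (setOf_dist_lt_subset_prod_ball_add hTball)
    _ ≤ μ.real T * (K * ε) := by rw [hA]; gcongr; exact hann
    _ = K * ε * (μ T).toReal := mul_comm _ _

/-- Let `(X,d)` be a metric space with a finite Borel measure `μ`, let
`s ∈ ℝ`, `ε > 0`, `K > 0`, and let `T ⊆ X` be a measurable set of diameter less than `ε`
with a distinguished point `x_T ∈ T`. If `μ(𝒜(x_T,s,ε)) ≤ K·ε` then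
`|μ(B(x_T,s))·μ(T) − (μ×μ)({(x,y) ∈ T × X : d(x,y) < s})| ≤ K·ε·μ(T)`. -/
theorem prod_measure_ball_estimate {X : Type*} [MeasurableSpace X] [MetricSpace X]
    [BorelSpace X] (μ : Measure X) [IsFiniteMeasure μ]
    (s ε K : ℝ) (hε : 0 < ε) (hK : 0 < K)
    (T : Set X) (hTm : MeasurableSet T) (hT : EMetric.diam T < ENNReal.ofReal ε)
    (xT : X) (hxT : xT ∈ T)
    (hann : (μ {y | s - ε ≤ dist xT y ∧ dist xT y < s + ε}).toReal ≤ K * ε) :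
    |(μ (Metric.ball xT s)).toReal * (μ T).toReal -
        ((μ.prod μ) {p : X × X | p.1 ∈ T ∧ dist p.1 p.2 < s}).toReal|
      ≤ K * ε * (μ T).toReal :=
  prod_measure_ball_estimate_general μ s ε K T hT xT hxT hann
end

section
/- Let (X,d) be a metric space equipped with a Borel probability measure μ, let f : X → X be Borel measurable, m ∈ ℕ, s ∈ ℝ, ε > 0, K > 0, and let T ⊆ X be a measurable set of diameter less than ε with a distinguished point x_T ∈ T. Suppose that for every measurable set E ⊆ X one has |μ(E)·μ(T) − μ(f^{−m}(E) ∩ T)| < ε·μ(T), and that μ(𝒜(x_T,s,ε)) ≤ K·ε. Then |μ({x ∈ T : d(x, f^m(x)) < s}) − μ({x ∈ T : d(x_T, f^m(x)) < s})| ≤ (K + 1)·ε·μ(T). -/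
open MeasureTheory Set
open scoped symmDiff

/-! Since `T` has diameter less than `ε`, for `x ∈ T` the conditions `d(x, f^m x) < s` and
`d(x_T, f^m x) < s` can disagree only when `f^m x` lies in the annulus `𝒜(x_T, s, ε)`. So the
symmetric difference of the two sets lies in `f^{-m}(𝒜) ∩ T`, whose measure the mixing
hypothesis bounds by `(μ(𝒜) + ε) μ(T) ≤ (K + 1) ε μ(T)`. -/

def annulus {X : Type*} [PseudoMetricSpace X] (x : X) (s ε : ℝ) : Set X :=
  {y | s - ε ≤ dist x y ∧ dist x y < s + ε}

section annulus

variable {X : Type*} [PseudoMetricSpace X]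

theorem measurableSet_annulus [MeasurableSpace X] [OpensMeasurableSpace X] (x : X) (s ε : ℝ) :
    MeasurableSet (annulus x s ε) :=
  (continuous_const.dist continuous_id).measurable measurableSet_Ico

theorem mem_annulus_of_xor_dist_lt {a b z : X} {s ε : ℝ} (hab : dist a b < ε)
    (h : Xor (dist a z < s) (dist b z < s)) : z ∈ annulus b s ε := by
  have hba : dist b a < ε := dist_comm a b ▸ hab
  have hε : 0 < ε := dist_nonneg.trans_lt hab
  rcases h with ⟨ha, hb⟩ | ⟨hb, ha⟩
  · exact ⟨by linarith [not_lt.mp hb], by linarith [dist_triangle b a z]⟩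
  · exact ⟨by linarith [not_lt.mp ha, dist_triangle a b z], by linarith⟩

theorem sep_dist_symmDiff_subset_preimage_annulus {T : Set X} {c : X} {s ε : ℝ} (F : X → X)
    (hT : ∀ x ∈ T, dist x c < ε) :
    {x ∈ T | dist x (F x) < s} ∆ {x ∈ T | dist c (F x) < s} ⊆ F ⁻¹' annulus c s ε ∩ T := by
  rintro x (⟨⟨hx, h₁⟩, h₂⟩ | ⟨⟨hx, h₁⟩, h₂⟩)
  · exact ⟨mem_annulus_of_xor_dist_lt (hT x hx) (.inl ⟨h₁, fun h => h₂ ⟨hx, h⟩⟩), hx⟩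
  · exact ⟨mem_annulus_of_xor_dist_lt (hT x hx) (.inr ⟨h₁, fun h => h₂ ⟨hx, h⟩⟩), hx⟩

end annulus

theorem abs_measureReal_sub_le_of_symmDiff_subset {α : Type*} [MeasurableSpace α]
    {μ : Measure α} [IsFiniteMeasure μ] {s t u : Set α} (h : s ∆ t ⊆ u) :
    |μ.real s - μ.real t| ≤ μ.real u := by
  obtain ⟨hs, ht⟩ : s ⊆ t ∪ u ∧ t ⊆ s ∪ u := symmDiff_le_iff.mp h
  rw [abs_sub_le_iff]
  exact ⟨by linarith [measureReal_mono (μ := μ) hs, measureReal_union_le (μ := μ) t u],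
    by linarith [measureReal_mono (μ := μ) ht, measureReal_union_le (μ := μ) s u]⟩

theorem measure_symmDiff_estimate_general {X : Type*} [MeasurableSpace X] [MetricSpace X]
    [BorelSpace X] (μ : Measure X) [IsProbabilityMeasure μ]
    (f : X → X) (m : ℕ) (s ε K : ℝ)
    (T : Set X) (hT : EMetric.diam T < ENNReal.ofReal ε)
    (xT : X) (hxT : xT ∈ T)
    (hmix : ∀ E : Set X, MeasurableSet E →
      |(μ E).toReal * (μ T).toReal - (μ (f^[m] ⁻¹' E ∩ T)).toReal| < ε * (μ T).toReal)
    (hann : (μ {y | s - ε ≤ dist xT y ∧ dist xT y < s + ε}).toReal ≤ K * ε) :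
    |(μ {x ∈ T | dist x (f^[m] x) < s}).toReal -
        (μ {x ∈ T | dist xT (f^[m] x) < s}).toReal| ≤ (K + 1) * ε * (μ T).toReal := by
  have hdist : ∀ x ∈ T, dist x xT < ε := fun x hx =>
    edist_lt_ofReal.mp ((Metric.edist_le_ediam_of_mem hx hxT).trans_lt hT)
  have hpre :
      μ.real (f^[m] ⁻¹' annulus xT s ε ∩ T) ≤ (μ.real (annulus xT s ε) + ε) * μ.real T := by
    have hmixAnn := (abs_lt.mp (hmix _ (measurableSet_annulus xT s ε))).1
    simp only [← measureReal_def] at hmixAnn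
    linarith
  calc _ ≤ μ.real (f^[m] ⁻¹' annulus xT s ε ∩ T) :=
        abs_measureReal_sub_le_of_symmDiff_subset
          (sep_dist_symmDiff_subset_preimage_annulus _ hdist)
    _ ≤ (K * ε + ε) * μ.real T := hpre.trans (by gcongr; exact hann)
    _ = (K + 1) * ε * μ.real T := by ring

/-- Let `(X,d)` be a metric space with Borel probability measure `μ`, let
`f : X → X` be Borel measurable, `m ∈ ℕ`, `s ∈ ℝ`, `ε > 0`, `K > 0`, and let `T ⊆ X` be a
measurable set of diameter less than `ε` with a distinguished point `x_T ∈ T`. Suppose that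
`|μ(E)·μ(T) − μ(f^{−m}(E) ∩ T)| < ε·μ(T)` for every measurable `E ⊆ X`, and that
`μ(𝒜(x_T,s,ε)) ≤ K·ε`. Then
`|μ({x ∈ T : d(x, f^m(x)) < s}) − μ({x ∈ T : d(x_T, f^m(x)) < s})| ≤ (K + 1)·ε·μ(T)`. -/
theorem measure_symmDiff_estimate {X : Type*} [MeasurableSpace X] [MetricSpace X]
    [BorelSpace X] (μ : Measure X) [IsProbabilityMeasure μ]
    (f : X → X) (hf : Measurable f) (m : ℕ) (s ε K : ℝ) (hε : 0 < ε) (hK : 0 < K)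
    (T : Set X) (hTm : MeasurableSet T) (hT : EMetric.diam T < ENNReal.ofReal ε)
    (xT : X) (hxT : xT ∈ T)
    (hmix : ∀ E : Set X, MeasurableSet E →
      |(μ E).toReal * (μ T).toReal - (μ (f^[m] ⁻¹' E ∩ T)).toReal| < ε * (μ T).toReal)
    (hann : (μ {y | s - ε ≤ dist xT y ∧ dist xT y < s + ε}).toReal ≤ K * ε) :
    |(μ {x ∈ T | dist x (f^[m] x) < s}).toReal -
        (μ {x ∈ T | dist xT (f^[m] x) < s}).toReal| ≤ (K + 1) * ε * (μ T).toReal :=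
  measure_symmDiff_estimate_general μ f m s ε K T hT xT hxT hmix hann
end

section
/- Let T : [0,1] → [0,1] be the tent map and let λ denote the Lebesgue measure restricted to [0,1]. For every m ∈ ℕ, every integer i with 0 ≤ i < 2^m, and every measurable set E ⊆ [0,1], one has λ(T^{−m}(E) ∩ [i·2^{−m}, (i+1)·2^{−m}]) = λ(E)·2^{−m}; equivalently, |λ(E)·λ(T_m^i) − λ(T^{−m}(E) ∩ T_m^i)| = 0 for the dyadic interval T_m^i = [i·2^{−m}, (i+1)·2^{−m}]. -/
open MeasureTheory Set

private lemma vol_affine {a : ℝ} (ha : a ≠ 0) (b : ℝ) (S : Set ℝ) :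
    volume ((fun x => a * x + b) ⁻¹' S) = ENNReal.ofReal |a⁻¹| * volume S := by
  have h : (fun x : ℝ => a * x + b) = (fun h : ℝ => b + h) ∘ (fun x : ℝ => a * x) := by
    funext x; simp [add_comm]
  rw [h, Set.preimage_comp, Real.volume_preimage_mul_left ha,
    measure_preimage_add volume b S]

private lemma half_step (X : ENNReal) (m : ℕ) :
    ENNReal.ofReal |(2:ℝ)⁻¹| * (X / 2 ^ m) = X / 2 ^ (m + 1) := by
  have h : ENNReal.ofReal |(2:ℝ)⁻¹| = (2:ENNReal)⁻¹ := by
    rw [abs_of_pos (by norm_num), ENNReal.ofReal_inv_of_pos (by norm_num)]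
    norm_num
  rw [h, pow_succ, ENNReal.div_eq_inv_mul, ENNReal.div_eq_inv_mul, ← mul_assoc,
    ENNReal.mul_inv (by left; positivity) (by left; norm_num)]
  ring

private lemma tent_aux (T : ℝ → ℝ) (hT : ∀ x, T x = 2 * min x (1 - x)) :
    ∀ m : ℕ, ∀ i : ℕ, i < 2 ^ m → ∀ E : Set ℝ, E ⊆ Set.Icc 0 1 →
      volume (T^[m] ⁻¹' E ∩ Set.Icc ((i : ℝ) / 2 ^ m) (((i : ℝ) + 1) / 2 ^ m))
        = volume E / 2 ^ m := by
  intro m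
  induction m with
  | zero =>
    intro i hi E hE1
    interval_cases i
    simp only [pow_zero, Function.iterate_zero, Set.preimage_id, Nat.cast_zero, zero_add,
      div_one]
    rw [Set.inter_eq_left.mpr hE1]
  | succ m IH =>
    intro j hj E hE1
    have h2m : (0:ℝ) < 2 ^ m := by positivity
    have h2m1 : (0:ℝ) < 2 ^ (m + 1) := by positivity
    have hps : (2:ℝ) ^ (m + 1) = 2 ^ m * 2 := by ring
    by_cases hcase : j < 2 ^ m
    · -- left half : T x = 2x
      have hj1 : ((j:ℝ) + 1) ≤ 2 ^ m := by exact_mod_cast hcase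
      have hset : T^[m+1] ⁻¹' E ∩ Set.Icc ((j:ℝ)/2^(m+1)) (((j:ℝ)+1)/2^(m+1))
          = (fun x => (2:ℝ) * x + 0) ⁻¹'
              (T^[m] ⁻¹' E ∩ Set.Icc ((j:ℝ)/2^m) (((j:ℝ)+1)/2^m)) := by
        ext x
        simp only [Set.mem_inter_iff, Set.mem_preimage, Set.mem_Icc,
          Function.iterate_succ_apply, add_zero]
        constructor
        · rintro ⟨h1, h2, h3⟩
          have hle : (j:ℝ) ≤ x * 2 ^ (m+1) := (div_le_iff₀ h2m1).mp h2
          have hge : x * 2 ^ (m+1) ≤ (j:ℝ) + 1 := (le_div_iff₀ h2m1).mp h3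
          rw [hps] at hle hge
          have hx : x ≤ 1/2 := by nlinarith
          have hTx : T x = 2 * x := by rw [hT x, min_eq_left (by linarith)]
          rw [hTx] at h1
          refine ⟨h1, ?_, ?_⟩
          · rw [div_le_iff₀ h2m]; nlinarith
          · rw [le_div_iff₀ h2m]; nlinarith
        · rintro ⟨h1, h2, h3⟩
          have hle : (j:ℝ) ≤ 2 * x * 2 ^ m := (div_le_iff₀ h2m).mp h2
          have hge : 2 * x * 2 ^ m ≤ (j:ℝ) + 1 := (le_div_iff₀ h2m).mp h3
          have hx : x ≤ 1/2 := by nlinarith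
          have hTx : T x = 2 * x := by rw [hT x, min_eq_left (by linarith)]
          rw [hTx]
          refine ⟨h1, ?_, ?_⟩
          · rw [div_le_iff₀ h2m1, hps]; nlinarith
          · rw [le_div_iff₀ h2m1, hps]; nlinarith
      rw [hset, vol_affine (by norm_num : (2:ℝ) ≠ 0) 0, IH j hcase E hE1, half_step]
    · -- right half : T x = -2x + 2
      push_neg at hcase
      set k := 2 ^ (m + 1) - 1 - j with hkdef
      have hpsn : 2 ^ (m + 1) = 2 ^ m * 2 := by ring
      have hk : k < 2 ^ m := by omega
      have hnat : j + k + 1 = 2 ^ (m + 1) := by omega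
      have hjk : (j:ℝ) + (k:ℝ) + 1 = 2 ^ (m + 1) := by
        have h := congrArg (fun n : ℕ => (n : ℝ)) hnat
        push_cast at h
        linarith
      have hk1 : ((k:ℝ) + 1) ≤ 2 ^ m := by exact_mod_cast hk
      have hcast : (2:ℝ) ^ m ≤ (j:ℝ) := by exact_mod_cast hcase
      rw [hps] at hjk
      have hset : T^[m+1] ⁻¹' E ∩ Set.Icc ((j:ℝ)/2^(m+1)) (((j:ℝ)+1)/2^(m+1))
          = (fun x => (-2:ℝ) * x + 2) ⁻¹'
              (T^[m] ⁻¹' E ∩ Set.Icc ((k:ℝ)/2^m) (((k:ℝ)+1)/2^m)) := by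
        ext x
        simp only [Set.mem_inter_iff, Set.mem_preimage, Set.mem_Icc,
          Function.iterate_succ_apply]
        constructor
        · rintro ⟨h1, h2, h3⟩
          have hle : (j:ℝ) ≤ x * 2 ^ (m+1) := (div_le_iff₀ h2m1).mp h2
          have hge : x * 2 ^ (m+1) ≤ (j:ℝ) + 1 := (le_div_iff₀ h2m1).mp h3
          rw [hps] at hle hge
          have hx : 1/2 ≤ x := by nlinarith
          have hTx : T x = -2 * x + 2 := by
            rw [hT x, min_eq_right (by linarith)]; ring
          rw [hTx] at h1
          refine ⟨h1, ?_, ?_⟩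
          · rw [div_le_iff₀ h2m]; nlinarith
          · rw [le_div_iff₀ h2m]; nlinarith
        · rintro ⟨h1, h2, h3⟩
          have hle : (k:ℝ) ≤ (-2 * x + 2) * 2 ^ m := (div_le_iff₀ h2m).mp h2
          have hge : (-2 * x + 2) * 2 ^ m ≤ (k:ℝ) + 1 := (le_div_iff₀ h2m).mp h3
          have hx : 1/2 ≤ x := by nlinarith
          have hTx : T x = -2 * x + 2 := by
            rw [hT x, min_eq_right (by linarith)]; ring
          rw [hTx]
          refine ⟨h1, ?_, ?_⟩
          · rw [div_le_iff₀ h2m1, hps]; nlinarith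
          · rw [le_div_iff₀ h2m1, hps]; nlinarith
      rw [hset, vol_affine (by norm_num : (-2:ℝ) ≠ 0) 2, IH k hk E hE1]
      have habs : |(-2:ℝ)⁻¹| = |(2:ℝ)⁻¹| := by norm_num
      rw [habs, half_step]

/-- Let `T` be the tent map `T(x) = 2·min{x, 1 − x}` on `[0,1]` and `λ`
Lebesgue measure restricted to `[0,1]`. For every `m ∈ ℕ`, every integer `0 ≤ i < 2^m` and
every measurable `E ⊆ [0,1]`,
`λ(T^{−m}(E) ∩ [i·2^{−m}, (i+1)·2^{−m}]) = λ(E)·2^{−m}`. -/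
theorem tent_map_dyadic_mixing (T : ℝ → ℝ) (hT : ∀ x, T x = 2 * min x (1 - x))
    (m i : ℕ) (hi : i < 2 ^ m)
    (E : Set ℝ) (hE : MeasurableSet E) (hE1 : E ⊆ Set.Icc 0 1) :
    (volume.restrict (Set.Icc (0:ℝ) 1))
        (T^[m] ⁻¹' E ∩ Set.Icc ((i : ℝ) / 2 ^ m) (((i : ℝ) + 1) / 2 ^ m))
      = (volume.restrict (Set.Icc (0:ℝ) 1)) E / 2 ^ m := by
  have hTc : Continuous T := by
    have : T = fun x => 2 * min x (1 - x) := funext hT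
    rw [this]
    exact continuous_const.mul (continuous_id.min (continuous_const.sub continuous_id))
  have hTm : Measurable T := hTc.measurable
  have h2m : (0:ℝ) < 2 ^ m := by positivity
  have hMeas : MeasurableSet
      (T^[m] ⁻¹' E ∩ Set.Icc ((i : ℝ) / 2 ^ m) (((i : ℝ) + 1) / 2 ^ m)) :=
    ((hTm.iterate m) hE).inter measurableSet_Icc
  rw [Measure.restrict_apply hMeas, Measure.restrict_apply hE,
    Set.inter_eq_left.mpr hE1]
  have hsub : Set.Icc ((i : ℝ) / 2 ^ m) (((i : ℝ) + 1) / 2 ^ m) ⊆ Set.Icc (0:ℝ) 1 := by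
    apply Set.Icc_subset_Icc
    · positivity
    · rw [div_le_one h2m]; exact_mod_cast hi
  rw [Set.inter_eq_left.mpr (Set.inter_subset_right.trans hsub)]
  exact tent_aux T hT m i hi E hE1
end

section
/- Let T : [0,1] → [0,1] be the tent map and let λ denote the Lebesgue measure restricted to [0,1]. Then T is ergodic with respect to λ: every measurable set E ⊆ [0,1] with T^{−1}(E) = E satisfies λ(E) = 0 or λ(E) = 1. -/
open MeasureTheory Set

/-- The tent function maps `[0,1)` (indeed all of `[0,1]`) into `[0,1]`. -/
lemma tent_mem_Icc {x : ℝ} (hx : x ∈ Set.Icc (0:ℝ) 1) :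
    2 * min x (1 - x) ∈ Set.Icc (0:ℝ) 1 := by
  obtain ⟨h0, h1⟩ := hx
  constructor
  · rcases le_total x (1 - x) with h | h
    · rw [min_eq_left h]; linarith
    · rw [min_eq_right h]; linarith
  · rcases le_total x (1 - x) with h | h
    · rw [min_eq_left h]; linarith
    · rw [min_eq_right h]; linarith

/-- Semiconjugacy of the doubling map and the tent map on fractional parts:
`tent (fract (2x)) = tent (tent (fract x))`. -/
lemma tent_fract_two_mul (x : ℝ) :
    2 * min (Int.fract (2 * x)) (1 - Int.fract (2 * x)) =
      2 * min (2 * min (Int.fract x) (1 - Int.fract x))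
        (1 - 2 * min (Int.fract x) (1 - Int.fract x)) := by
  set u := Int.fract x with hu
  have hu0 : 0 ≤ u := Int.fract_nonneg x
  have hu1 : u < 1 := Int.fract_lt_one x
  have hfrac : Int.fract (2 * x) = Int.fract (2 * u) := by
    have : 2 * x = 2 * u + 2 * ⌊x⌋ := by
      rw [hu, Int.fract]; push_cast; ring
    rw [this]
    rw [show (2 : ℝ) * ⌊x⌋ = ((2 * ⌊x⌋ : ℤ) : ℝ) by push_cast; ring]
    exact Int.fract_add_intCast _ _
  rw [hfrac]
  rcases lt_or_ge u (1/2) with h | h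
  · have hmin : min u (1 - u) = u := min_eq_left (by linarith)
    have h2u : Int.fract (2 * u) = 2 * u := Int.fract_eq_self.2 ⟨by linarith, by linarith⟩
    rw [hmin, h2u]
  · have hmin : min u (1 - u) = 1 - u := min_eq_right (by linarith)
    have h2u : Int.fract (2 * u) = 2 * u - 1 := by
      have : Int.fract (2 * u) = Int.fract (2 * u - (1:ℤ)) := (Int.fract_sub_intCast _ _).symm
      rw [this]
      push_cast
      exact Int.fract_eq_self.2 ⟨by linarith, by linarith⟩
    rw [hmin, h2u]
    have e1 : (1 : ℝ) - (2 * u - 1) = 2 - 2 * u := by ring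
    have e2 : (1 : ℝ) - 2 * (1 - u) = 2 * u - 1 := by ring
    have e3 : (2 : ℝ) * (1 - u) = 2 - 2 * u := by ring
    rw [e1, e2, e3, min_comm]

/-- The tent map `T(x) = 2·min{x, 1 − x}` on `[0,1]` is ergodic with
respect to Lebesgue measure `λ` restricted to `[0,1]`: every measurable set `E ⊆ [0,1]`
with `T^{−1}(E) = E` (as subsets of `[0,1]`) satisfies `λ(E) = 0` or `λ(E) = 1`. -/
theorem tent_map_ergodic (T : ℝ → ℝ) (hT : ∀ x, T x = 2 * min x (1 - x))
    (E : Set ℝ) (hE : MeasurableSet E) (hE1 : E ⊆ Set.Icc 0 1)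
    (hinv : T ⁻¹' E ∩ Set.Icc 0 1 = E) :
    (volume.restrict (Set.Icc (0:ℝ) 1)) E = 0 ∨
      (volume.restrict (Set.Icc (0:ℝ) 1)) E = 1 := by
  have hTfun : T = fun x => 2 * min x (1 - x) := funext hT
  have hTm : Measurable T := by
    rw [hTfun]; fun_prop
  -- the lift map from the circle
  set φ : AddCircle (1:ℝ) → ℝ :=
    fun y => T ((AddCircle.equivIco 1 0 y : ℝ)) with hφ
  have hφm : Measurable φ :=
    hTm.comp (measurable_subtype_coe.comp (AddCircle.measurableEquivIco (T := 1) 0).measurable)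
  -- value of φ on coercions
  have hrep : ∀ x : ℝ, (AddCircle.equivIco 1 0 ((x : ℝ) : AddCircle (1:ℝ)) : ℝ) = Int.fract x := by
    intro x
    rw [AddCircle.coe_equivIco_mk_apply]
    simp
  have hφcoe : ∀ x : ℝ, φ ((x : ℝ) : AddCircle (1:ℝ)) = T (Int.fract x) := by
    intro x; rw [hφ]; simp only; rw [hrep]
  -- φ lands in [0,1]
  have hφmem : ∀ y, φ y ∈ Set.Icc (0:ℝ) 1 := by
    intro y
    have h := (AddCircle.equivIco 1 0 y).2
    simp only [hφ, hT]
    exact tent_mem_Icc ⟨h.1, by linarith [h.2]⟩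
  -- semiconjugacy : φ (2 • y) = T (φ y)
  have hsemi : ∀ y : AddCircle (1:ℝ), φ ((2:ℕ) • y) = T (φ y) := by
    intro y
    induction y using QuotientAddGroup.induction_on with
    | H x =>
      have h2 : ((2:ℕ) • (x : AddCircle (1:ℝ))) = ((2 * x : ℝ) : AddCircle (1:ℝ)) := by
        push_cast [← QuotientAddGroup.mk_nsmul]
        norm_num [two_mul]
      rw [h2, hφcoe, hφcoe]
      simp only [hT]
      exact tent_fract_two_mul x
  -- the invariant set upstairs
  set E' : Set (AddCircle (1:ℝ)) := φ ⁻¹' E with hE'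
  have hE'm : MeasurableSet E' := hφm hE
  have hE'inv : (fun y : AddCircle (1:ℝ) => (2:ℕ) • y) ⁻¹' E' = E' := by
    ext y
    simp only [hE', Set.mem_preimage]
    rw [hsemi]
    constructor
    · intro h
      rw [← hinv]
      exact ⟨h, hφmem y⟩
    · intro h
      rw [← hinv] at h
      exact h.1
  -- ergodicity of the doubling map
  have herg : Ergodic (fun y : AddCircle (1:ℝ) => (2:ℕ) • y) :=
    AddCircle.ergodic_nsmul one_lt_two
  have hdich := herg.ae_empty_or_univ hE'm hE'inv
  -- compute the measure of E' in terms of E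
  have hmk : Measurable ((↑) : ℝ → AddCircle (1:ℝ)) := AddCircle.measurable_mk'
  have hpre : volume E' = volume (T ⁻¹' E ∩ Set.Ioc (0:ℝ) 1) := by
    have hmap := (AddCircle.measurePreserving_mk (1:ℝ) 0).map_eq
    calc volume E' = (Measure.map ((↑) : ℝ → AddCircle (1:ℝ))
          (volume.restrict (Set.Ioc 0 (0 + 1)))) E' := by rw [hmap]
      _ = (volume.restrict (Set.Ioc (0:ℝ) (0+1))) (((↑) : ℝ → AddCircle (1:ℝ)) ⁻¹' E') := by
          rw [Measure.map_apply hmk hE'm]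
      _ = volume ((((↑) : ℝ → AddCircle (1:ℝ)) ⁻¹' E') ∩ Set.Ioc (0:ℝ) 1) := by
          rw [Measure.restrict_apply (hmk hE'm), zero_add]
      _ = volume (T ⁻¹' E ∩ Set.Ioc (0:ℝ) 1) := by
          congr 1
          ext x
          simp only [Set.mem_inter_iff, Set.mem_preimage, hE', Set.mem_Ioc]
          constructor
          · rintro ⟨h1, h2⟩
            rw [hφcoe] at h1
            refine ⟨?_, h2⟩
            rcases lt_or_eq_of_le h2.2 with h | h
            · rwa [Int.fract_eq_self.2 ⟨h2.1.le, h⟩] at h1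
            · subst h
              have : Int.fract (1:ℝ) = 0 := by norm_num [Int.fract]
              rw [this] at h1
              have h0 : T 0 = 0 := by rw [hT]; norm_num
              have h1' : T 1 = 0 := by rw [hT]; norm_num
              rwa [h0, ← h1'] at h1
          · rintro ⟨h1, h2⟩
            rw [hφcoe]
            refine ⟨?_, h2⟩
            rcases lt_or_eq_of_le h2.2 with h | h
            · rwa [Int.fract_eq_self.2 ⟨h2.1.le, h⟩]
            · subst h
              have : Int.fract (1:ℝ) = 0 := by norm_num [Int.fract]
              rw [this]
              have h0 : T 0 = 0 := by rw [hT]; norm_num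
              have h1' : T 1 = 0 := by rw [hT]; norm_num
              rwa [h0, ← h1']
  -- compute volume (T⁻¹ E ∩ Ioc 0 1) = volume E
  have hhalf : (2:ℝ)⁻¹ ≠ 0 := by norm_num
  have hleft : volume (T ⁻¹' E ∩ Set.Ioc (0:ℝ) (1/2)) = ENNReal.ofReal (1/2) * volume E := by
    have hset : T ⁻¹' E ∩ Set.Ioc (0:ℝ) (1/2) = (((2:ℝ) * ·) ⁻¹' E) ∩ Set.Ioc (0:ℝ) (1/2) := by
      ext x
      simp only [Set.mem_inter_iff, Set.mem_preimage, Set.mem_Ioc]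
      constructor
      · rintro ⟨h1, h2⟩
        rw [hT, min_eq_left (by linarith [h2.2])] at h1
        exact ⟨h1, h2⟩
      · rintro ⟨h1, h2⟩
        rw [hT, min_eq_left (by linarith [h2.2])]
        exact ⟨h1, h2⟩
    rw [hset]
    have hsub : (((2:ℝ) * ·) ⁻¹' E) ⊆ Set.Icc (0:ℝ) (1/2) := by
      intro x hx
      have h2 : (2:ℝ) * x ∈ Set.Icc (0:ℝ) 1 := hE1 hx
      exact ⟨by linarith [h2.1], by linarith [h2.2]⟩
    have hfull : volume (((2:ℝ) * ·) ⁻¹' E) = ENNReal.ofReal (1/2) * volume E := by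
      rw [Real.volume_preimage_mul_left two_ne_zero E,
        show |(2:ℝ)⁻¹| = (1/2 : ℝ) by norm_num]
    have hle1 : volume ((((2:ℝ) * ·) ⁻¹' E) ∩ Set.Ioc (0:ℝ) (1/2)) ≤
        volume (((2:ℝ) * ·) ⁻¹' E) := measure_mono Set.inter_subset_left
    have hle2 : volume (((2:ℝ) * ·) ⁻¹' E) ≤
        volume ((((2:ℝ) * ·) ⁻¹' E) ∩ Set.Ioc (0:ℝ) (1/2)) + volume {(0:ℝ)} := by
      refine le_trans (measure_mono ?_) (measure_union_le _ _)
      intro x hx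
      rcases eq_or_ne x 0 with rfl | hne
      · exact Or.inr rfl
      · have hm := hsub hx
        exact Or.inl ⟨hx, lt_of_le_of_ne hm.1 (Ne.symm hne), hm.2⟩
    rw [Real.volume_singleton, add_zero] at hle2
    rw [← hfull]
    exact le_antisymm hle1 hle2
  have hright : volume (T ⁻¹' E ∩ Set.Ioc (1/2:ℝ) 1) = ENNReal.ofReal (1/2) * volume E := by
    have hset : T ⁻¹' E ∩ Set.Ioc (1/2:ℝ) 1 =
        ((fun x : ℝ => 2 - 2 * x) ⁻¹' E) ∩ Set.Ioc (1/2:ℝ) 1 := by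
      ext x
      simp only [Set.mem_inter_iff, Set.mem_preimage, Set.mem_Ioc]
      constructor
      · rintro ⟨h1, h2⟩
        rw [hT, min_eq_right (by linarith [h2.1])] at h1
        refine ⟨?_, h2⟩
        have : 2 * (1 - x) = 2 - 2 * x := by ring
        rwa [this] at h1
      · rintro ⟨h1, h2⟩
        refine ⟨?_, h2⟩
        rw [hT, min_eq_right (by linarith [h2.1])]
        have : 2 * (1 - x) = 2 - 2 * x := by ring
        rwa [this]
    rw [hset]
    have hfull : volume ((fun x : ℝ => 2 - 2 * x) ⁻¹' E) = ENNReal.ofReal (1/2) * volume E := by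
      have hcomp : (fun x : ℝ => 2 - 2 * x) ⁻¹' E =
          (((-2 : ℝ) * ·) ⁻¹' (((2:ℝ) + ·) ⁻¹' E)) := by
        ext x
        have e : (2:ℝ) + -2 * x = 2 - 2 * x := by ring
        simp only [Set.mem_preimage, e]
      rw [hcomp, Real.volume_preimage_mul_left (by norm_num : (-2:ℝ) ≠ 0),
        measure_preimage_add volume 2 E,
        show |((-2:ℝ))⁻¹| = (1/2 : ℝ) by norm_num]
    have hsub : ((fun x : ℝ => 2 - 2 * x) ⁻¹' E) ⊆ Set.Icc (1/2:ℝ) 1 := by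
      intro x hx
      have h2 : (2:ℝ) - 2 * x ∈ Set.Icc (0:ℝ) 1 := hE1 hx
      exact ⟨by linarith [h2.2], by linarith [h2.1]⟩
    have hle1 : volume (((fun x : ℝ => 2 - 2 * x) ⁻¹' E) ∩ Set.Ioc (1/2:ℝ) 1) ≤
        volume ((fun x : ℝ => 2 - 2 * x) ⁻¹' E) := measure_mono Set.inter_subset_left
    have hle2 : volume ((fun x : ℝ => 2 - 2 * x) ⁻¹' E) ≤
        volume (((fun x : ℝ => 2 - 2 * x) ⁻¹' E) ∩ Set.Ioc (1/2:ℝ) 1) + volume {(1/2:ℝ)} := by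
      refine le_trans (measure_mono ?_) (measure_union_le _ _)
      intro x hx
      rcases eq_or_ne x (1/2) with rfl | hne
      · exact Or.inr rfl
      · have hm := hsub hx
        exact Or.inl ⟨hx, lt_of_le_of_ne hm.1 (Ne.symm hne), hm.2⟩
    rw [Real.volume_singleton, add_zero] at hle2
    rw [← hfull]
    exact le_antisymm hle1 hle2
  have hTpre : MeasurableSet (T ⁻¹' E) := hTm hE
  have hsplit : volume (T ⁻¹' E ∩ Set.Ioc (0:ℝ) 1) = volume E := by
    have hunion : T ⁻¹' E ∩ Set.Ioc (0:ℝ) 1 =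
        (T ⁻¹' E ∩ Set.Ioc (0:ℝ) (1/2)) ∪ (T ⁻¹' E ∩ Set.Ioc (1/2:ℝ) 1) := by
      rw [← Set.inter_union_distrib_left, Set.Ioc_union_Ioc_eq_Ioc (by norm_num) (by norm_num)]
    have hdisj : Disjoint (T ⁻¹' E ∩ Set.Ioc (0:ℝ) (1/2)) (T ⁻¹' E ∩ Set.Ioc (1/2:ℝ) 1) := by
      refine Set.disjoint_left.2 ?_
      rintro x ⟨_, hx1⟩ ⟨_, hx2⟩
      exact absurd hx2.1 (not_lt.2 hx1.2)
    rw [hunion, measure_union hdisj (hTpre.inter measurableSet_Ioc), hleft, hright,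
      ← add_mul, ← ENNReal.ofReal_add (by norm_num) (by norm_num)]
    norm_num
  -- put everything together
  have hrestr : (volume.restrict (Set.Icc (0:ℝ) 1)) E = volume E := by
    rw [Measure.restrict_apply hE, Set.inter_eq_self_of_subset_left hE1]
  have hμE' : volume E' = volume E := by rw [hpre, hsplit]
  rcases hdich with h | h
  · left
    rw [hrestr, ← hμE']
    have : volume E' = volume (∅ : Set (AddCircle (1:ℝ))) := measure_congr h
    simpa using this
  · right
    rw [hrestr, ← hμE']
    have : volume E' = volume (Set.univ : Set (AddCircle (1:ℝ))) := measure_congr h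
    rw [this]
    have := AddCircle.measure_univ (T := 1)
    simpa using this
end

section
/- Let T : [0,1] → [0,1] be the tent map and let λ denote the Lebesgue measure restricted to [0,1]. Define F_m(s) := λ({x ∈ [0,1] : |x − T^m(x)| < s}) and F(s) := (λ × λ)({(x,y) ∈ [0,1]² : |x − y| < s}). Then there exists a constant C > 0 such that for every m ≥ 1, sup_{s∈ℝ} |F_m(s) − F(s)| ≤ C·2^{−m}. -/
open MeasureTheory Set

def Ij (m j : ℕ) : Set ℝ := Ico ((j:ℝ)/2^m) (((j:ℝ)+1)/2^m)

def cell (T : ℝ → ℝ) (m j k : ℕ) : Set ℝ := {x | x ∈ Ij m j ∧ T^[m] x ∈ Ij m k}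

noncomputable def vol2 : Measure (ℝ × ℝ) := (volume : Measure ℝ).prod volume

def collar (s ε : ℝ) : Set (ℝ × ℝ) := {p | s - ε ≤ |p.1 - p.2| ∧ |p.1 - p.2| ≤ s + ε}


lemma tent_branch (T : ℝ → ℝ) (hT : ∀ x, T x = 2 * min x (1 - x)) :
    ∀ m : ℕ, ∀ j : ℕ, j < 2^m → ∀ x : ℝ, (j:ℝ)/2^m ≤ x → x ≤ ((j:ℝ)+1)/2^m →
      T^[m] x = if Even j then 2^m * x - j else ((j:ℝ)+1) - 2^m * x := by
  intro m
  induction m with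
  | zero =>
      intro j hj x h1 h2
      interval_cases j
      simp
  | succ m ih =>
      intro j hj x h1 h2
      have hPm : (0:ℝ) < 2^m := by positivity
      have hP : ((2:ℝ)^(m+1)) = 2 * 2^m := by ring
      rw [Function.iterate_succ_apply]
      by_cases hc : j < 2^m
      · -- left half
        have hx2 : x ≤ 1/2 := by
          have : ((j:ℝ)+1) ≤ 2^m := by
            have : (j:ℝ) + 1 ≤ (2^m : ℕ) := by exact_mod_cast Nat.succ_le_of_lt hc
            simpa using this
          rw [hP] at h2
          rw [le_div_iff₀ (by positivity)] at h2
          nlinarith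
        have hTx : T x = 2 * x := by
          rw [hT]
          rw [min_eq_left (by linarith)]
        rw [hTx]
        have hb1 : (j:ℝ)/2^m ≤ 2*x := by
          rw [hP] at h1; rw [div_le_iff₀ (by positivity)] at h1 ⊢; nlinarith
        have hb2 : 2*x ≤ ((j:ℝ)+1)/2^m := by
          rw [hP] at h2; rw [le_div_iff₀ (by positivity)] at h2 ⊢; nlinarith
        rw [ih j hc (2*x) hb1 hb2]
        by_cases hpar : Even j <;> simp [hpar] <;> ring
      · -- right half
        have hc' : 2^m ≤ j := le_of_not_gt hc
        have hj1 : j ≤ 2^(m+1) - 1 := by omega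
        set k : ℕ := 2^(m+1) - 1 - j with hk
        have hkj : k + j + 1 = 2^(m+1) := by
          have : 1 ≤ 2^(m+1) := Nat.one_le_two_pow
          omega
        have hkR : (k:ℝ) = 2*2^m - 1 - j := by
          have : ((k:ℝ)) + j + 1 = ((2^(m+1) : ℕ) : ℝ) := by exact_mod_cast congrArg (Nat.cast : ℕ → ℝ) hkj
          push_cast at this
          linarith
        have hklt : k < 2^m := by
          have h2m : 2^(m+1) = 2^m + 2^m := by ring
          omega
        have hx2 : 1/2 ≤ x := by
          have : (2:ℝ)^m ≤ j := by exact_mod_cast hc'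
          rw [hP] at h1; rw [div_le_iff₀ (by positivity)] at h1; nlinarith
        have hTx : T x = 2 - 2*x := by
          rw [hT, min_eq_right (by linarith)]; ring
        rw [hTx]
        have hjR : (j:ℝ) < 2*2^m := by
          have : (j:ℝ) < ((2^(m+1):ℕ):ℝ) := by exact_mod_cast hj
          push_cast at this; nlinarith
        have hb1 : (k:ℝ)/2^m ≤ 2 - 2*x := by
          rw [div_le_iff₀ (by positivity)]
          rw [hP, le_div_iff₀ (by positivity)] at h2
          rw [hkR]; nlinarith
        have hb2 : 2 - 2*x ≤ ((k:ℝ)+1)/2^m := by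
          rw [le_div_iff₀ (by positivity)]
          rw [hP, div_le_iff₀ (by positivity)] at h1
          rw [hkR]; nlinarith
        rw [ih k hklt (2 - 2*x) hb1 hb2]
        have hpar : Even k ↔ ¬ Even j := by
          have h1' : ¬ Even (k + j + 1) → True := fun _ => trivial
          constructor
          · intro hek hej
            have : Even (k + j + 1) ↔ Even (2^(m+1)) := by rw [hkj]
            have he2 : Even (2^(m+1)) := by
              exact (Nat.even_pow).mpr ⟨even_two, by omega⟩
            rw [← hkj] at he2
            rcases hek with ⟨a, ha⟩; rcases hej with ⟨b, hb⟩
            omega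
          · intro hoj
            have he2 : Even (2^(m+1)) := (Nat.even_pow).mpr ⟨even_two, by omega⟩
            rw [← hkj] at he2
            rcases Nat.not_even_iff_odd.mp hoj with ⟨b, hb⟩
            rcases he2 with ⟨a, ha⟩
            exact ⟨a - b - 1, by omega⟩
        by_cases hj2 : Even j
        · have hk2 : ¬ Even k := by simp [hpar, hj2]
          simp only [hk2, if_false, hj2, if_true]
          rw [hkR, hP]; ring
        · have hk2 : Even k := hpar.mpr hj2
          simp only [hk2, if_true, hj2, if_false]
          rw [hkR, hP]; ring


lemma cell_sandwich (T : ℝ → ℝ) (hT : ∀ x, T x = 2 * min x (1 - x))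
    (m j k : ℕ) (hj : j < 2^m) (hk : k < 2^m) :
    ∃ a : ℝ, Ioo a (a + 1/(2^m * 2^m)) ⊆ cell T m j k ∧
      cell T m j k ⊆ Icc a (a + 1/(2^m * 2^m)) := by
  have hP : (0:ℝ) < 2^m := by positivity
  have hPP : (0:ℝ) < 2^m * 2^m := by positivity
  have hkP : (k:ℝ) + 1 ≤ 2^m := by exact_mod_cast Nat.succ_le_of_lt hk
  have hk0 : (0:ℝ) ≤ (k:ℝ) := Nat.cast_nonneg k
  by_cases hje : Even j
  · set q : ℝ := (j:ℝ)*2^m + k with hq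
    have hEq : q/(2^m*2^m) + 1/(2^m*2^m) = (q+1)/(2^m*2^m) := by ring
    refine ⟨q/(2^m*2^m), ?_, ?_⟩
    · intro x hx
      obtain ⟨hx1, hx2⟩ := hx
      have h1' : q < x*(2^m*2^m) := (div_lt_iff₀ hPP).mp hx1
      have h2' : x*(2^m*2^m) < q+1 := (lt_div_iff₀ hPP).mp (hEq ▸ hx2)
      have hxIj : x ∈ Ij m j :=
        ⟨(div_le_iff₀ hP).mpr (by nlinarith), (lt_div_iff₀ hP).mpr (by nlinarith)⟩
      have hfor := tent_branch T hT m j hj x hxIj.1 (le_of_lt hxIj.2)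
      rw [if_pos hje] at hfor
      refine ⟨hxIj, ?_, ?_⟩
      · rw [hfor]; exact (div_le_iff₀ hP).mpr (by nlinarith)
      · rw [hfor]; exact (lt_div_iff₀ hP).mpr (by nlinarith)
    · intro x hx
      obtain ⟨hxIj, hxk1, hxk2⟩ := hx
      have hfor := tent_branch T hT m j hj x hxIj.1 (le_of_lt hxIj.2)
      rw [if_pos hje] at hfor
      rw [hfor] at hxk1 hxk2
      have h1' : (k:ℝ) ≤ (2^m*x - j)*2^m := (div_le_iff₀ hP).mp hxk1
      have h2' : (2^m*x - j)*2^m < (k:ℝ)+1 := (lt_div_iff₀ hP).mp hxk2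
      constructor
      · exact (div_le_iff₀ hPP).mpr (by nlinarith)
      · rw [hEq]; exact (le_div_iff₀ hPP).mpr (by nlinarith)
  · set q : ℝ := ((j:ℝ)+1)*2^m - k - 1 with hq
    have hEq : q/(2^m*2^m) + 1/(2^m*2^m) = (q+1)/(2^m*2^m) := by ring
    refine ⟨q/(2^m*2^m), ?_, ?_⟩
    · intro x hx
      obtain ⟨hx1, hx2⟩ := hx
      have h1' : q < x*(2^m*2^m) := (div_lt_iff₀ hPP).mp hx1
      have h2' : x*(2^m*2^m) < q+1 := (lt_div_iff₀ hPP).mp (hEq ▸ hx2)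
      have hxIj : x ∈ Ij m j :=
        ⟨(div_le_iff₀ hP).mpr (by nlinarith), (lt_div_iff₀ hP).mpr (by nlinarith)⟩
      have hfor := tent_branch T hT m j hj x hxIj.1 (le_of_lt hxIj.2)
      rw [if_neg hje] at hfor
      refine ⟨hxIj, ?_, ?_⟩
      · rw [hfor]; exact (div_le_iff₀ hP).mpr (by nlinarith)
      · rw [hfor]; exact (lt_div_iff₀ hP).mpr (by nlinarith)
    · intro x hx
      obtain ⟨hxIj, hxk1, hxk2⟩ := hx
      have hfor := tent_branch T hT m j hj x hxIj.1 (le_of_lt hxIj.2)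
      rw [if_neg hje] at hfor
      rw [hfor] at hxk1 hxk2
      have h1' : (k:ℝ) ≤ ((j:ℝ)+1 - 2^m*x)*2^m := (div_le_iff₀ hP).mp hxk1
      have h2' : ((j:ℝ)+1 - 2^m*x)*2^m < (k:ℝ)+1 := (lt_div_iff₀ hP).mp hxk2
      constructor
      · exact (div_le_iff₀ hPP).mpr (by nlinarith)
      · rw [hEq]; exact (le_div_iff₀ hPP).mpr (by nlinarith)


lemma tent_cont (T : ℝ → ℝ) (hT : ∀ x, T x = 2 * min x (1 - x)) : Continuous T := by
  have : T = fun x => 2 * min x (1 - x) := funext hT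
  rw [this]
  fun_prop

lemma cell_meas (T : ℝ → ℝ) (hT : ∀ x, T x = 2 * min x (1 - x)) (m j k : ℕ) :
    MeasurableSet (cell T m j k) := by
  have h1 : MeasurableSet (Ij m j) := measurableSet_Ico
  have h2 : MeasurableSet (T^[m] ⁻¹' (Ij m k)) :=
    (measurableSet_Ico : MeasurableSet (Ij m k)).preimage
      ((tent_cont T hT).iterate m).measurable
  exact h1.inter h2

lemma cell_vol (T : ℝ → ℝ) (hT : ∀ x, T x = 2 * min x (1 - x))
    (m j k : ℕ) (hj : j < 2^m) (hk : k < 2^m) :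
    volume (cell T m j k) = ENNReal.ofReal (1/(2^m * 2^m)) := by
  obtain ⟨a, hsub, hsup⟩ := cell_sandwich T hT m j k hj hk
  refine le_antisymm ?_ ?_
  · calc volume (cell T m j k) ≤ volume (Icc a (a + 1/(2^m*2^m))) := measure_mono hsup
      _ = ENNReal.ofReal (1/(2^m*2^m)) := by rw [Real.volume_Icc]; ring_nf
  · calc ENNReal.ofReal (1/(2^m*2^m)) = volume (Ioo a (a + 1/(2^m*2^m))) := by
          rw [Real.volume_Ioo]; ring_nf
      _ ≤ volume (cell T m j k) := measure_mono hsub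

lemma mem_Ij_exists (m : ℕ) (u : ℝ) (h0 : 0 ≤ u) (h1 : u < 1) :
    ∃ k : ℕ, k < 2^m ∧ u ∈ Ij m k := by
  have hP : (0:ℝ) < 2^m := by positivity
  set k : ℕ := ⌊u * 2^m⌋.toNat with hk
  have h0' : (0:ℤ) ≤ ⌊u * 2^m⌋ := Int.floor_nonneg.mpr (by positivity)
  have hcast : (k:ℝ) = (⌊u * 2^m⌋ : ℝ) := by
    rw [hk]; exact_mod_cast congrArg (Int.cast : ℤ → ℝ) (Int.toNat_of_nonneg h0')
  have hle : (k:ℝ) ≤ u * 2^m := by rw [hcast]; exact Int.floor_le _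
  have hlt : u * 2^m < (k:ℝ) + 1 := by rw [hcast]; exact Int.lt_floor_add_one _
  refine ⟨k, ?_, ?_, ?_⟩
  · have : (k:ℝ) < 2^m := lt_of_le_of_lt hle (by nlinarith)
    exact_mod_cast this
  · rw [div_le_iff₀ hP]; linarith
  · rw [lt_div_iff₀ hP]; linarith

lemma Ij_inj (m j j' : ℕ) (x : ℝ) (h : x ∈ Ij m j) (h' : x ∈ Ij m j') : j = j' := by
  have hP : (0:ℝ) < 2^m := by positivity
  obtain ⟨h1, h2⟩ := h
  obtain ⟨h1', h2'⟩ := h'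
  rw [div_le_iff₀ hP] at h1 h1'
  rw [lt_div_iff₀ hP] at h2 h2'
  have : (j:ℝ) < j' + 1 := by nlinarith
  have h5 : j < j' + 1 := by exact_mod_cast this
  have : (j':ℝ) < j + 1 := by nlinarith
  have h6 : j' < j + 1 := by exact_mod_cast this
  omega

lemma cell_cover (T : ℝ → ℝ) (hT : ∀ x, T x = 2 * min x (1 - x))
    (m j : ℕ) (hj : j < 2^m) (x : ℝ) (hx : x ∈ Ij m j) (hne : x ≠ (j:ℝ)/2^m) :
    ∃ k : ℕ, k < 2^m ∧ x ∈ cell T m j k := by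
  have hP : (0:ℝ) < 2^m := by positivity
  have hfor := tent_branch T hT m j hj x hx.1 (le_of_lt hx.2)
  have hx1 := hx.1
  have hx2 := hx.2
  rw [div_le_iff₀ hP] at hx1
  rw [lt_div_iff₀ hP] at hx2
  have hu : 0 ≤ T^[m] x ∧ T^[m] x < 1 := by
    by_cases hje : Even j
    · rw [if_pos hje] at hfor
      constructor
      · rw [hfor]; nlinarith
      · rw [hfor]; nlinarith
    · rw [if_neg hje] at hfor
      have hgt : (j:ℝ)/2^m < x := lt_of_le_of_ne hx.1 (Ne.symm hne)
      rw [div_lt_iff₀ hP] at hgt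
      constructor
      · rw [hfor]; nlinarith
      · rw [hfor]; nlinarith
  obtain ⟨k, hk, hmem⟩ := mem_Ij_exists m (T^[m] x) hu.1 hu.2
  exact ⟨k, hk, hx, hmem⟩

lemma A_meas (T : ℝ → ℝ) (hT : ∀ x, T x = 2 * min x (1 - x)) (m : ℕ) (s : ℝ) :
    MeasurableSet {x : ℝ | |x - T^[m] x| < s} := by
  have hc : Continuous fun x : ℝ => |x - T^[m] x| :=
    (continuous_id.sub ((tent_cont T hT).iterate m)).abs
  exact measurableSet_lt hc.measurable measurable_const

lemma cell_disj (T : ℝ → ℝ) (m : ℕ) :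
    ∀ p p' : ℕ × ℕ, p ≠ p' → Disjoint (cell T m p.1 p.2) (cell T m p'.1 p'.2) := by
  intro p p' hne
  rw [Set.disjoint_left]
  intro x hx hx'
  obtain ⟨hxj, hxk⟩ := hx
  obtain ⟨hxj', hxk'⟩ := hx'
  exact hne (Prod.ext (Ij_inj m p.1 p'.1 x hxj hxj') (Ij_inj m p.2 p'.2 (T^[m] x) hxk hxk'))

lemma Ij_subset_Icc (m j : ℕ) (hj : j < 2^m) : Ij m j ⊆ Icc (0:ℝ) 1 := by
  have hP : (0:ℝ) < 2^m := by positivity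
  have hjP : (j:ℝ) + 1 ≤ 2^m := by exact_mod_cast Nat.succ_le_of_lt hj
  intro x hx
  obtain ⟨h1, h2⟩ := hx
  rw [div_le_iff₀ hP] at h1
  rw [lt_div_iff₀ hP] at h2
  constructor
  · nlinarith [Nat.cast_nonneg (α := ℝ) j]
  · nlinarith

lemma Fm_eq_sum (T : ℝ → ℝ) (hT : ∀ x, T x = 2 * min x (1 - x)) (m : ℕ) (s : ℝ) :
    (volume.restrict (Icc (0:ℝ) 1)) {x : ℝ | |x - T^[m] x| < s}
      = ∑ p ∈ (Finset.range (2^m)) ×ˢ (Finset.range (2^m)),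
          volume ({x : ℝ | |x - T^[m] x| < s} ∩ cell T m p.1 p.2) := by
  set A := {x : ℝ | |x - T^[m] x| < s} with hA
  have hAm : MeasurableSet A := A_meas T hT m s
  set F := (Finset.range (2^m)) ×ˢ (Finset.range (2^m)) with hF
  have hdisj : Set.PairwiseDisjoint (↑F : Set (ℕ × ℕ)) (fun p => A ∩ cell T m p.1 p.2) := by
    intro p _ p' _ hne
    exact Disjoint.mono inter_subset_right inter_subset_right (cell_disj T m p p' hne)
  have hmeas : ∀ p ∈ F, MeasurableSet (A ∩ cell T m p.1 p.2) :=
    fun p _ => hAm.inter (cell_meas T hT m p.1 p.2)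
  have hunion := measure_biUnion_finset (μ := volume) hdisj hmeas
  rw [Measure.restrict_apply hAm]
  rw [← hunion]
  refine le_antisymm ?_ ?_
  · -- A ∩ Icc 0 1 ⊆ union ∪ E with E null
    set E : Set ℝ := Set.range (fun j : ℕ => (j:ℝ)/2^m) ∪ {1} with hE
    have hEc : E.Countable := (Set.countable_range _).union (Set.countable_singleton 1)
    have hEnull : volume E = 0 := hEc.measure_zero _
    have hcov : A ∩ Icc 0 1 ⊆ (⋃ p ∈ F, A ∩ cell T m p.1 p.2) ∪ E := by
      intro x ⟨hxA, hxI⟩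
      by_cases hxE : x ∈ E
      · exact Or.inr hxE
      · left
        have hx1 : x < 1 := lt_of_le_of_ne hxI.2 (by
          intro h; exact hxE (Or.inr (by simp [h])))
        obtain ⟨j, hj, hxIj⟩ := mem_Ij_exists m x hxI.1 hx1
        have hne : x ≠ (j:ℝ)/2^m := by
          intro h; exact hxE (Or.inl ⟨j, h.symm⟩)
        obtain ⟨k, hk, hxc⟩ := cell_cover T hT m j hj x hxIj hne
        have hpF : ((j,k) : ℕ×ℕ) ∈ (↑F : Set (ℕ×ℕ)) := by
          simp [hF, Finset.mem_product, hj, hk]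
        exact Set.mem_biUnion hpF ⟨hxA, hxc⟩
    calc volume (A ∩ Icc 0 1)
        ≤ volume ((⋃ p ∈ F, A ∩ cell T m p.1 p.2) ∪ E) := measure_mono hcov
      _ ≤ volume (⋃ p ∈ F, A ∩ cell T m p.1 p.2) + volume E := measure_union_le _ _
      _ = volume (⋃ p ∈ F, A ∩ cell T m p.1 p.2) := by rw [hEnull, add_zero]
  · refine measure_mono ?_
    refine Set.iUnion₂_subset ?_
    intro p hp
    have hj : p.1 < 2^m := by
      rw [hF, Finset.mem_product] at hp; exact Finset.mem_range.mp hp.1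
    exact fun x hx => ⟨hx.1, Ij_subset_Icc m p.1 hj hx.2.1⟩


lemma B_meas (s : ℝ) : MeasurableSet {p : ℝ × ℝ | |p.1 - p.2| < s} := by
  have hc : Continuous fun p : ℝ × ℝ => |p.1 - p.2| := (continuous_fst.sub continuous_snd).abs
  exact measurableSet_lt hc.measurable measurable_const

lemma Qvol (m j k : ℕ) : vol2 (Ij m j ×ˢ Ij m k) = ENNReal.ofReal (1/(2^m*2^m)) := by
  have hP : (0:ℝ) < 2^m := by positivity
  rw [vol2, Measure.prod_prod]
  unfold Ij
  rw [Real.volume_Ico, Real.volume_Ico,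
    show ((j:ℝ)+1)/2^m - (j:ℝ)/2^m = 1/2^m by ring,
    show ((k:ℝ)+1)/2^m - (k:ℝ)/2^m = 1/2^m by ring,
    ← ENNReal.ofReal_mul (by positivity)]
  congr 1
  field_simp

lemma F_eq_sum (m : ℕ) (s : ℝ) :
    ((volume.restrict (Icc (0:ℝ) 1)).prod (volume.restrict (Icc (0:ℝ) 1)))
        {p : ℝ × ℝ | |p.1 - p.2| < s}
      = ∑ p ∈ (Finset.range (2^m)) ×ˢ (Finset.range (2^m)),
          vol2 ({p : ℝ × ℝ | |p.1 - p.2| < s} ∩ (Ij m p.1 ×ˢ Ij m p.2)) := by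
  set B := {p : ℝ × ℝ | |p.1 - p.2| < s} with hB
  have hBm : MeasurableSet B := B_meas s
  set F := (Finset.range (2^m)) ×ˢ (Finset.range (2^m)) with hF
  have hprod : (volume.restrict (Icc (0:ℝ) 1)).prod (volume.restrict (Icc (0:ℝ) 1))
      = vol2.restrict (Icc (0:ℝ) 1 ×ˢ Icc (0:ℝ) 1) := by
    rw [vol2, Measure.prod_restrict]
  rw [hprod, Measure.restrict_apply hBm]
  have hdisj : Set.PairwiseDisjoint (↑F : Set (ℕ × ℕ))
      (fun p : ℕ × ℕ => B ∩ (Ij m p.1 ×ˢ Ij m p.2)) := by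
    intro p _ p' _ hne
    simp only [Function.onFun]
    rw [Set.disjoint_left]
    rintro z ⟨_, hz1, hz2⟩ ⟨_, hz1', hz2'⟩
    exact hne (Prod.ext (Ij_inj m p.1 p'.1 z.1 hz1 hz1') (Ij_inj m p.2 p'.2 z.2 hz2 hz2'))
  have hmeas : ∀ p ∈ F, MeasurableSet (B ∩ (Ij m p.1 ×ˢ Ij m p.2)) :=
    fun p _ => hBm.inter (measurableSet_Ico.prod measurableSet_Ico)
  rw [← measure_biUnion_finset (μ := vol2) hdisj hmeas]
  set E2 : Set (ℝ × ℝ) := ({(1:ℝ)} ×ˢ (univ : Set ℝ)) ∪ ((univ : Set ℝ) ×ˢ {(1:ℝ)}) with hE2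
  have hE2null : vol2 E2 = 0 := by
    refine le_antisymm (le_trans (measure_union_le _ _) ?_) zero_le
    rw [vol2, Measure.prod_prod, Measure.prod_prod]
    simp
  refine le_antisymm ?_ ?_
  · have hcov : B ∩ Icc (0:ℝ) 1 ×ˢ Icc (0:ℝ) 1
        ⊆ (⋃ p ∈ F, B ∩ (Ij m p.1 ×ˢ Ij m p.2)) ∪ E2 := by
      rintro ⟨x, y⟩ ⟨hzB, hzx, hzy⟩
      by_cases hx1 : x = 1
      · exact Or.inr (Or.inl ⟨by simp [hx1], trivial⟩)
      by_cases hy1 : y = 1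
      · exact Or.inr (Or.inr ⟨trivial, by simp [hy1]⟩)
      left
      obtain ⟨j, hj, hxj⟩ := mem_Ij_exists m x hzx.1 (lt_of_le_of_ne hzx.2 hx1)
      obtain ⟨k, hk, hyk⟩ := mem_Ij_exists m y hzy.1 (lt_of_le_of_ne hzy.2 hy1)
      have hpF : ((j,k) : ℕ×ℕ) ∈ (↑F : Set (ℕ×ℕ)) := by
        simp [hF, Finset.mem_product, hj, hk]
      exact Set.mem_biUnion hpF ⟨hzB, hxj, hyk⟩
    calc vol2 (B ∩ Icc (0:ℝ) 1 ×ˢ Icc (0:ℝ) 1)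
        ≤ vol2 ((⋃ p ∈ F, B ∩ (Ij m p.1 ×ˢ Ij m p.2)) ∪ E2) := measure_mono hcov
      _ ≤ vol2 (⋃ p ∈ F, B ∩ (Ij m p.1 ×ˢ Ij m p.2)) + vol2 E2 := measure_union_le _ _
      _ = vol2 (⋃ p ∈ F, B ∩ (Ij m p.1 ×ˢ Ij m p.2)) := by rw [hE2null, add_zero]
  · refine measure_mono (Set.iUnion₂_subset ?_)
    intro p hp
    rw [hF, Finset.mem_product] at hp
    rintro ⟨x, y⟩ ⟨hzB, hzx, hzy⟩
    exact ⟨hzB, Ij_subset_Icc m p.1 (Finset.mem_range.mp hp.1) hzx,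
      Ij_subset_Icc m p.2 (Finset.mem_range.mp hp.2) hzy⟩


lemma collar_meas (s ε : ℝ) : MeasurableSet (collar s ε) := by
  have hc : Continuous fun p : ℝ × ℝ => |p.1 - p.2| := (continuous_fst.sub continuous_snd).abs
  have h1 : MeasurableSet {p : ℝ × ℝ | s - ε ≤ |p.1 - p.2|} :=
    measurableSet_le measurable_const hc.measurable
  have h2 : MeasurableSet {p : ℝ × ℝ | |p.1 - p.2| ≤ s + ε} :=
    measurableSet_le hc.measurable measurable_const
  exact h1.inter h2

lemma collar_bound (s ε : ℝ) (hε : 0 ≤ ε) :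
    vol2 (collar s ε ∩ Icc (0:ℝ) 1 ×ˢ (univ : Set ℝ)) ≤ ENNReal.ofReal (4*ε) := by
  set S := collar s ε ∩ Icc (0:ℝ) 1 ×ˢ (univ : Set ℝ) with hS
  have hSm : MeasurableSet S :=
    (collar_meas s ε).inter (measurableSet_Icc.prod MeasurableSet.univ)
  rw [vol2, Measure.prod_apply hSm]
  have hslice : ∀ x : ℝ, volume (Prod.mk x ⁻¹' S)
      ≤ (Icc (0:ℝ) 1).indicator (fun _ => ENNReal.ofReal (4*ε)) x := by
    intro x
    by_cases hx : x ∈ Icc (0:ℝ) 1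
    · rw [Set.indicator_of_mem hx]
      have hsub : Prod.mk x ⁻¹' S ⊆ Icc (x-s-ε) (x-s+ε) ∪ Icc (x+s-ε) (x+s+ε) := by
        intro y hy
        obtain ⟨⟨h1, h2⟩, _⟩ := hy
        rcases abs_cases (x - y) with ⟨he, _⟩ | ⟨he, _⟩
        · left; constructor <;> [linarith [he ▸ h2]; linarith [he ▸ h1]]
        · right; constructor <;> [linarith [he ▸ h1]; linarith [he ▸ h2]]
      calc volume (Prod.mk x ⁻¹' S) ≤ volume (Icc (x-s-ε) (x-s+ε) ∪ Icc (x+s-ε) (x+s+ε)) :=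
            measure_mono hsub
        _ ≤ volume (Icc (x-s-ε) (x-s+ε)) + volume (Icc (x+s-ε) (x+s+ε)) := measure_union_le _ _
        _ = ENNReal.ofReal (2*ε) + ENNReal.ofReal (2*ε) := by
            rw [Real.volume_Icc, Real.volume_Icc]
            congr 1 <;> congr 1 <;> ring
        _ = ENNReal.ofReal (4*ε) := by rw [← ENNReal.ofReal_add (by linarith) (by linarith)]; congr 1; ring
    · rw [Set.indicator_of_notMem hx]
      have : Prod.mk x ⁻¹' S = ∅ := by
        ext y; simp only [Set.mem_preimage, Set.mem_empty_iff_false, iff_false]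
        intro hy
        exact hx hy.2.1
      simp [this]
  calc ∫⁻ x, volume (Prod.mk x ⁻¹' S) ∂volume
      ≤ ∫⁻ x, (Icc (0:ℝ) 1).indicator (fun _ => ENNReal.ofReal (4*ε)) x ∂volume :=
        lintegral_mono hslice
    _ = ENNReal.ofReal (4*ε) * volume (Icc (0:ℝ) 1) := lintegral_indicator_const measurableSet_Icc _
    _ = ENNReal.ofReal (4*ε) := by rw [Real.volume_Icc]; norm_num


lemma Ij_diam (m i : ℕ) (y z : ℝ) (hy : y ∈ Ij m i) (hz : z ∈ Ij m i) : |y - z| ≤ 1/2^m := by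
  have hP : (0:ℝ) < 2^m := by positivity
  obtain ⟨hy1, hy2⟩ := hy
  obtain ⟨hz1, hz2⟩ := hz
  have h : ((i:ℝ)+1)/2^m - (i:ℝ)/2^m = 1/2^m := by ring
  rw [abs_le]
  constructor <;> nlinarith

lemma percell (T : ℝ → ℝ) (hT : ∀ x, T x = 2 * min x (1 - x))
    (m j k : ℕ) (hj : j < 2^m) (hk : k < 2^m) (s : ℝ) :
    |(volume ({x : ℝ | |x - T^[m] x| < s} ∩ cell T m j k)).toReal
        - (vol2 ({p : ℝ × ℝ | |p.1 - p.2| < s} ∩ Ij m j ×ˢ Ij m k)).toReal|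
      ≤ (vol2 (collar s (2/2^m) ∩ Ij m j ×ˢ Ij m k)).toReal := by
  have hP : (0:ℝ) < 2^m := by positivity
  set A := {x : ℝ | |x - T^[m] x| < s} with hA
  set B := {p : ℝ × ℝ | |p.1 - p.2| < s} with hB
  set Q := Ij m j ×ˢ Ij m k with hQ
  by_cases hBQ : Q ⊆ B
  · have hcA : A ∩ cell T m j k = cell T m j k := by
      rw [Set.inter_eq_right]
      intro x hx
      exact hBQ (Set.mk_mem_prod hx.1 hx.2)
    have hcB : B ∩ Q = Q := by rw [Set.inter_eq_right]; exact hBQ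
    rw [hcA, hcB, cell_vol T hT m j k hj hk, Qvol m j k, sub_self, abs_zero]
    exact ENNReal.toReal_nonneg
  · by_cases hBQ2 : ∀ z ∈ Q, z ∉ B
    · have hcA : A ∩ cell T m j k = ∅ := by
        ext x
        simp only [Set.mem_inter_iff, Set.mem_empty_iff_false, iff_false, not_and]
        intro hxA hxc
        exact hBQ2 _ (Set.mk_mem_prod hxc.1 hxc.2) hxA
      have hcB : B ∩ Q = ∅ := by
        ext z
        simp only [Set.mem_inter_iff, Set.mem_empty_iff_false, iff_false, not_and]
        intro hzB hzQ
        exact hBQ2 z hzQ hzB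
      simp [hcA, hcB]
    · push_neg at hBQ2
      obtain ⟨z1, hz1Q, hz1B⟩ := hBQ2
      obtain ⟨z2, hz2Q, hz2B⟩ := Set.not_subset.mp hBQ
      have hQcol : Q ⊆ collar s (2/2^m) := by
        intro w hw
        have d1 : |w.1 - z1.1| ≤ 1/2^m := Ij_diam m j _ _ hw.1 hz1Q.1
        have d2 : |w.2 - z1.2| ≤ 1/2^m := Ij_diam m k _ _ hw.2 hz1Q.2
        have d3 : |w.1 - z2.1| ≤ 1/2^m := Ij_diam m j _ _ hw.1 hz2Q.1
        have d4 : |w.2 - z2.2| ≤ 1/2^m := Ij_diam m k _ _ hw.2 hz2Q.2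
        have hz1 : |z1.1 - z1.2| < s := hz1B
        have hz2 : s ≤ |z2.1 - z2.2| := not_lt.mp hz2B
        have e1 : |(w.1 - w.2) - (z1.1 - z1.2)| ≤ 2/2^m := by
          calc |(w.1 - w.2) - (z1.1 - z1.2)| = |(w.1 - z1.1) - (w.2 - z1.2)| := by ring_nf
            _ ≤ |w.1 - z1.1| + |w.2 - z1.2| := abs_sub _ _
            _ ≤ 2/2^m := by rw [show (2:ℝ)/2^m = 1/2^m + 1/2^m by ring]; linarith
        have e2 : |(w.1 - w.2) - (z2.1 - z2.2)| ≤ 2/2^m := by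
          calc |(w.1 - w.2) - (z2.1 - z2.2)| = |(w.1 - z2.1) - (w.2 - z2.2)| := by ring_nf
            _ ≤ |w.1 - z2.1| + |w.2 - z2.2| := abs_sub _ _
            _ ≤ 2/2^m := by rw [show (2:ℝ)/2^m = 1/2^m + 1/2^m by ring]; linarith
        have f1 : |w.1 - w.2| ≤ |z1.1 - z1.2| + 2/2^m := by
          have := abs_sub_abs_le_abs_sub (w.1 - w.2) (z1.1 - z1.2)
          linarith
        have f2 : |z2.1 - z2.2| - 2/2^m ≤ |w.1 - w.2| := by
          have := abs_sub_abs_le_abs_sub (z2.1 - z2.2) (w.1 - w.2)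
          rw [abs_sub_comm] at e2
          linarith
        exact ⟨by linarith, by linarith⟩
      have hcC : collar s (2/2^m) ∩ Q = Q := by rw [Set.inter_eq_right]; exact hQcol
      have hfin : vol2 Q ≠ ⊤ := by
        rw [Qvol m j k]; exact ENNReal.ofReal_ne_top
      have ha1 : (volume (A ∩ cell T m j k)).toReal ≤ 1/(2^m*2^m) := by
        have h1 : volume (A ∩ cell T m j k) ≤ ENNReal.ofReal (1/(2^m*2^m)) := by
          rw [← cell_vol T hT m j k hj hk]
          exact measure_mono inter_subset_right
        calc (volume (A ∩ cell T m j k)).toReal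
            ≤ (ENNReal.ofReal (1/(2^m*2^m))).toReal := ENNReal.toReal_mono ENNReal.ofReal_ne_top h1
          _ = 1/(2^m*2^m) := ENNReal.toReal_ofReal (by positivity)
      have hb1 : (vol2 (B ∩ Q)).toReal ≤ 1/(2^m*2^m) := by
        have h1 : vol2 (B ∩ Q) ≤ ENNReal.ofReal (1/(2^m*2^m)) := by
          rw [← Qvol m j k]
          exact measure_mono inter_subset_right
        calc (vol2 (B ∩ Q)).toReal
            ≤ (ENNReal.ofReal (1/(2^m*2^m))).toReal := ENNReal.toReal_mono ENNReal.ofReal_ne_top h1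
          _ = 1/(2^m*2^m) := ENNReal.toReal_ofReal (by positivity)
      have hc1 : (vol2 (collar s (2/2^m) ∩ Q)).toReal = 1/(2^m*2^m) := by
        rw [hcC, Qvol m j k, ENNReal.toReal_ofReal (by positivity)]
      have h0a := ENNReal.toReal_nonneg (a := vol2 (B ∩ Q))
      have h0b := ENNReal.toReal_nonneg (a := volume (A ∩ cell T m j k))
      rw [hc1, abs_le]
      exact ⟨by linarith, by linarith⟩


/-- Let `T` be the tent map `T(x) = 2·min{x, 1 − x}` on `[0,1]` and `λ`
Lebesgue measure restricted to `[0,1]`. Define `F_m(s) = λ({x : |x − T^m(x)| < s})` and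
`F(s) = (λ×λ)({(x,y) : |x − y| < s})`. Then there is `C > 0` such that for every `m ≥ 1`,
`sup_s |F_m(s) − F(s)| ≤ C·2^{−m}`. -/
theorem tent_map_cdf_convergence (T : ℝ → ℝ) (hT : ∀ x, T x = 2 * min x (1 - x)) :
    ∃ C > 0, ∀ m : ℕ, 1 ≤ m → ∀ s : ℝ,
      |((volume.restrict (Set.Icc (0:ℝ) 1)) {x | |x - T^[m] x| < s}).toReal -
          (((volume.restrict (Set.Icc (0:ℝ) 1)).prod (volume.restrict (Set.Icc (0:ℝ) 1)))
            {p : ℝ × ℝ | |p.1 - p.2| < s}).toReal| ≤ C / 2 ^ m := by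
  refine ⟨8, by norm_num, ?_⟩
  intro m _ s
  have hP : (0:ℝ) < 2^m := by positivity
  set F := (Finset.range (2^m)) ×ˢ (Finset.range (2^m)) with hF
  set A := {x : ℝ | |x - T^[m] x| < s} with hA
  set B := {p : ℝ × ℝ | |p.1 - p.2| < s} with hB
  have hmemF : ∀ p : ℕ × ℕ, p ∈ F → p.1 < 2^m ∧ p.2 < 2^m := by
    intro p hp
    rw [hF, Finset.mem_product] at hp
    exact ⟨Finset.mem_range.mp hp.1, Finset.mem_range.mp hp.2⟩
  -- finiteness of summands
  have hfinA : ∀ p ∈ F, volume (A ∩ cell T m p.1 p.2) ≠ ⊤ := by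
    intro p hp
    have h1 : volume (A ∩ cell T m p.1 p.2) ≤ ENNReal.ofReal (1/(2^m*2^m)) := by
      rw [← cell_vol T hT m p.1 p.2 (hmemF p hp).1 (hmemF p hp).2]
      exact measure_mono inter_subset_right
    exact (lt_of_le_of_lt h1 ENNReal.ofReal_lt_top).ne
  have hfinB : ∀ p ∈ F, vol2 (B ∩ (Ij m p.1 ×ˢ Ij m p.2)) ≠ ⊤ := by
    intro p hp
    have h1 : vol2 (B ∩ (Ij m p.1 ×ˢ Ij m p.2)) ≤ ENNReal.ofReal (1/(2^m*2^m)) := by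
      rw [← Qvol m p.1 p.2]
      exact measure_mono inter_subset_right
    exact (lt_of_le_of_lt h1 ENNReal.ofReal_lt_top).ne
  have hfinC : ∀ p ∈ F, vol2 (collar s (2/2^m) ∩ (Ij m p.1 ×ˢ Ij m p.2)) ≠ ⊤ := by
    intro p hp
    have h1 : vol2 (collar s (2/2^m) ∩ (Ij m p.1 ×ˢ Ij m p.2)) ≤ ENNReal.ofReal (1/(2^m*2^m)) := by
      rw [← Qvol m p.1 p.2]
      exact measure_mono inter_subset_right
    exact (lt_of_le_of_lt h1 ENNReal.ofReal_lt_top).ne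
  rw [Fm_eq_sum T hT m s, F_eq_sum m s]
  rw [ENNReal.toReal_sum hfinA, ENNReal.toReal_sum hfinB]
  rw [← Finset.sum_sub_distrib]
  calc |∑ p ∈ F, ((volume (A ∩ cell T m p.1 p.2)).toReal
          - (vol2 (B ∩ (Ij m p.1 ×ˢ Ij m p.2))).toReal)|
      ≤ ∑ p ∈ F, |(volume (A ∩ cell T m p.1 p.2)).toReal
          - (vol2 (B ∩ (Ij m p.1 ×ˢ Ij m p.2))).toReal| := Finset.abs_sum_le_sum_abs _ _
    _ ≤ ∑ p ∈ F, (vol2 (collar s (2/2^m) ∩ (Ij m p.1 ×ˢ Ij m p.2))).toReal := by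
        refine Finset.sum_le_sum ?_
        intro p hp
        exact percell T hT m p.1 p.2 (hmemF p hp).1 (hmemF p hp).2 s
    _ = (∑ p ∈ F, vol2 (collar s (2/2^m) ∩ (Ij m p.1 ×ˢ Ij m p.2))).toReal :=
        (ENNReal.toReal_sum hfinC).symm
    _ ≤ 8 / 2^m := by
        have hdisj : Set.PairwiseDisjoint (↑F : Set (ℕ × ℕ))
            (fun p : ℕ × ℕ => collar s (2/2^m) ∩ (Ij m p.1 ×ˢ Ij m p.2)) := by
          intro p _ p' _ hne
          simp only [Function.onFun]
          rw [Set.disjoint_left]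
          rintro z ⟨_, hz1, hz2⟩ ⟨_, hz1', hz2'⟩
          exact hne (Prod.ext (Ij_inj m p.1 p'.1 z.1 hz1 hz1') (Ij_inj m p.2 p'.2 z.2 hz2 hz2'))
        have hmeas : ∀ p ∈ F, MeasurableSet (collar s (2/2^m) ∩ (Ij m p.1 ×ˢ Ij m p.2)) :=
          fun p _ => (collar_meas s (2/2^m)).inter (measurableSet_Ico.prod measurableSet_Ico)
        rw [← measure_biUnion_finset (μ := vol2) hdisj hmeas]
        have hsub : (⋃ p ∈ F, collar s (2/2^m) ∩ (Ij m p.1 ×ˢ Ij m p.2))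
            ⊆ collar s (2/2^m) ∩ Icc (0:ℝ) 1 ×ˢ (univ : Set ℝ) := by
          refine Set.iUnion₂_subset ?_
          intro p hp
          rintro z ⟨hzc, hz1, hz2⟩
          exact ⟨hzc, Ij_subset_Icc m p.1 (hmemF p hp).1 hz1, trivial⟩
        have hle : vol2 (⋃ p ∈ F, collar s (2/2^m) ∩ (Ij m p.1 ×ˢ Ij m p.2))
            ≤ ENNReal.ofReal (8/2^m) := by
          calc vol2 (⋃ p ∈ F, collar s (2/2^m) ∩ (Ij m p.1 ×ˢ Ij m p.2))
              ≤ vol2 (collar s (2/2^m) ∩ Icc (0:ℝ) 1 ×ˢ (univ : Set ℝ)) := measure_mono hsub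
            _ ≤ ENNReal.ofReal (4*(2/2^m)) := collar_bound s (2/2^m) (by positivity)
            _ = ENNReal.ofReal (8/2^m) := by congr 1; ring
        calc (vol2 (⋃ p ∈ F, collar s (2/2^m) ∩ (Ij m p.1 ×ˢ Ij m p.2))).toReal
            ≤ (ENNReal.ofReal (8/2^m)).toReal :=
              ENNReal.toReal_mono ENNReal.ofReal_ne_top hle
          _ = 8/2^m := ENNReal.toReal_ofReal (by positivity)
end
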